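/- arXiv:1908.07019 — 7 statements merged into one kernel-verified Lean document; each statement's English description precedes it below -/
import Mathlib

section
/- Let A be a p-adically complete Z_p-algebra. An S_A-module is projective if and only if it is projective as an A[[u]]-module, via the natural ring map A[[u]] → S_A induced by A → W(k') ⊗_{Z_p} A and u ↦ u. -/
open scoped TensorProduct
open PowerSeries

noncomputable section

variable (p : ℕ) [Fact p.Prime]
variable (k' : Type) [Field k'] [Fintype k'] [CharP k' p]

/-- The canonical ring homomorphism `ℤ_p →+* W(k')`, via `ℤ_p ≃ W(𝔽_p)`. -/
noncomputable def zpToWitt : ℤ_[p] →+* WittVector p k' :=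
  (WittVector.map (ZMod.castHom (dvd_refl p) k')).comp (WittVector.equiv p).symm.toRingHom

noncomputable instance : Algebra ℤ_[p] (WittVector p k') :=
  (zpToWitt p k').toAlgebra

/-- The coefficient ring `W(k') ⊗_{ℤ_p} R`. -/
abbrev WW (R : Type) [CommRing R] [Algebra ℤ_[p] R] : Type :=
  WittVector p k' ⊗[ℤ_[p]] R

/-- `𝔖_R := (W(k') ⊗_{ℤ_p} R)⟦u⟧`. -/
abbrev SS (R : Type) [CommRing R] [Algebra ℤ_[p] R] : Type :=
  PowerSeries (WW p k' R)

/-- `σ` is the Frobenius of `W(k') ⊗_{ℤ_p} R` (the Witt vector Frobenius on `W(k')` and the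
identity on `R`), and `φ` is the Frobenius endomorphism of `𝔖_R` (acting as `σ` on
coefficients and sending `u` to `u^p`). -/
def IsFrobeniusLift (R : Type) [CommRing R] [Algebra ℤ_[p] R]
    (σ : WW p k' R →+* WW p k' R) (φ : SS p k' R →+* SS p k' R) : Prop :=
  (∀ w : WittVector p k',
      σ (w ⊗ₜ[ℤ_[p]] (1 : R)) = (WittVector.frobenius w) ⊗ₜ[ℤ_[p]] (1 : R)) ∧
    (∀ x : R, σ ((1 : WittVector p k') ⊗ₜ[ℤ_[p]] x) = (1 : WittVector p k') ⊗ₜ[ℤ_[p]] x) ∧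
    ∀ (g : SS p k' R) (n : ℕ),
      PowerSeries.coeff (R := WW p k' R) n (φ g) =
        if p ∣ n then σ (PowerSeries.coeff (R := WW p k' R) (n / p) g) else 0

/-- An Eisenstein polynomial of degree `e'` over `W(k')`: monic of degree `e' ≥ 1`, all
non-leading coefficients in `p·W(k')`, constant coefficient not in `p²·W(k')`. -/
def IsEisenstein (e' : ℕ) (E : Polynomial (WittVector p k')) : Prop :=
  E.Monic ∧ E.natDegree = e' ∧ 1 ≤ e' ∧
    (∀ i < e', E.coeff i ∈ Ideal.span {(p : WittVector p k')}) ∧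
    E.coeff 0 ∉ Ideal.span {(p : WittVector p k')} ^ 2

/-- The image in `𝔖_R` of a polynomial over `W(k')`. -/
noncomputable def polyToSS (R : Type) [CommRing R] [Algebra ℤ_[p] R]
    (E : Polynomial (WittVector p k')) : SS p k' R :=
  PowerSeries.mk fun n => (E.coeff n) ⊗ₜ[ℤ_[p]] (1 : R)

/-- The ring homomorphism `R →+* 𝔖_R`, `x ↦ 1 ⊗ x` (a constant power series). -/
noncomputable def AtoSS (R : Type) [CommRing R] [Algebra ℤ_[p] R] : R →+* SS p k' R :=
  (PowerSeries.C (R := WW p k' R)).comp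
    (Algebra.TensorProduct.includeRight :
        R →ₐ[ℤ_[p]] WittVector p k' ⊗[ℤ_[p]] R).toRingHom

/-- `(P, ι)` is the base change `φ*M` of `M` along `φ`, characterised by its universal
property among `φ`-semilinear maps out of `M`. -/
def IsFrobeniusBaseChange {S : Type} [CommRing S] (φ : S →+* S) {M P : Type}
    [AddCommGroup M] [Module S M] [AddCommGroup P] [Module S P] (ι : M →ₛₗ[φ] P) : Prop :=
  ∀ (Q : Type) (_ : AddCommGroup Q) (_ : Module S Q) (g : M →ₛₗ[φ] Q),
    ∃! h : P →ₗ[S] Q, ∀ m : M, h (ι m) = g m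

/-- The linearization `1 ⊗ Φ : φ*M → M` of the `φ`-semilinear endomorphism `Φ` of `M`
becomes an isomorphism after inverting `E` (i.e. after localizing at the powers of `E`). -/
def LinearizationBijectiveAfterInverting {S : Type} [CommRing S] (φ : S →+* S) (E : S)
    {M : Type} [AddCommGroup M] [Module S M] (Φ : M →ₛₗ[φ] M) : Prop :=
  ∃ (P : Type) (_ : AddCommGroup P) (_ : Module S P) (ι : M →ₛₗ[φ] P)
      (Φlin : P →ₗ[S] M),
    IsFrobeniusBaseChange φ ι ∧ (∀ m : M, Φlin (ι m) = Φ m) ∧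
      Function.Bijective ⇑(LocalizedModule.map (Submonoid.powers E) Φlin)

variable (A : Type) [CommRing A] [Algebra ℤ_[p] A]

/-- The natural ring map `A⟦u⟧ → 𝔖_A` induced by `A → W(k') ⊗_{ℤ_p} A`, `a ↦ 1 ⊗ a`, and
`u ↦ u`. -/
noncomputable def AuToSS : PowerSeries A →+* SS p k' A :=
  PowerSeries.map
    (Algebra.TensorProduct.includeRight :
        A →ₐ[ℤ_[p]] WittVector p k' ⊗[ℤ_[p]] A).toRingHom

/-!
`𝔖_A` is the base change of `A⟦u⟧` along `ℤ_p → W(k')`. The Teichmüller lifts span `W(k')` modulo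
`p`, so by successive approximation `W(k')` is a finite torsion-free, hence free, `ℤ_p`-module;
a `ℤ_p`-basis of `W(k')` gives coefficientwise an `A⟦u⟧`-basis of `𝔖_A`, and
`A⟦u⟧ ⊗_{ℤ_p} W(k') → 𝔖_A` sends basis to basis. Since Frobenius is bijective, every Witt vector
is a `p`-th power modulo `p`, so `Ω_{W(k')/ℤ_p} = p Ω_{W(k')/ℤ_p}` and Nakayama
shows that `W(k')` is formally unramified over `ℤ_p`.

Thus `𝔖_A` is a finite free, formally unramified `A⟦u⟧`-algebra. Projectivity descends from
`𝔖_A` to `A⟦u⟧` because `𝔖_A` is projective over `A⟦u⟧`, and ascends because over a formally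
unramified algebra `S/R` every `S`-module `M` is an `S`-linear direct summand of `S ⊗_R M`.
-/

theorem Module.Projective.trans (R S M : Type*) [CommSemiring R] [Semiring S] [Algebra R S]
    [AddCommMonoid M] [Module R M] [Module S M] [IsScalarTower R S M]
    [Module.Projective R S] [Module.Projective S M] : Module.Projective R M := by
  classical
  obtain ⟨s, hs⟩ := Module.projective_def.mp ‹Module.Projective S M›
  have : Module.Projective R (M →₀ S) := .of_equiv (finsuppLequivDFinsupp R).symm
  exact .of_split (s.restrictScalars R) ((Finsupp.linearCombination S id).restrictScalars R)
    (LinearMap.ext hs)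

theorem Submodule.span_range_eq_top_of_isPrecomplete {R M ι : Type*} [CommRing R]
    [AddCommGroup M] [Module R M] [Fintype ι] {P : R} [IsPrecomplete (Ideal.span {P}) R]
    [IsHausdorff (Ideal.span {P}) M] (w : ι → M)
    (hw : ∀ x : M, ∃ (γ : ι → R) (y : M), x = ∑ i, γ i • w i + P • y) :
    Submodule.span R (Set.range w) = ⊤ := by
  choose γ y hγy using hw
  refine Submodule.eq_top_iff'.mpr fun x => (Submodule.mem_span_range_iff_exists_fun R).mpr ?_
  -- `f n` truncates the `P`-adic expansions of the coefficients of `x` at `P ^ n`.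
  let f : ℕ → ι → R := fun n i => ∑ j ∈ Finset.range n, P ^ j * γ (y^[j] x) i
  have hf : ∀ n, x = ∑ i, f n i • w i + P ^ n • y^[n] x := by
    intro n
    induction n with
    | zero => simp [f]
    | succ n ih =>
      conv_lhs => rw [ih, hγy (y^[n] x), ← Function.iterate_succ_apply' y]
      simp only [f, Finset.sum_range_succ, add_smul, mul_smul, Finset.sum_add_distrib, smul_add,
        Finset.smul_sum, pow_succ, add_assoc]
  have hcauchy : ∀ i {m n : ℕ}, m ≤ n →
      f m i ≡ f n i [SMOD (Ideal.span {P} ^ m • ⊤ : Submodule R R)] := by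
    intro i m n hmn
    rw [SModEq.sub_mem, Ideal.smul_eq_mul, Ideal.mul_top, ← neg_sub, neg_mem_iff,
      Finset.sum_range_sub_sum_range hmn]
    refine Submodule.sum_mem _ fun j hj => Ideal.mul_mem_right _ _ ?_
    exact Ideal.pow_le_pow_right (Finset.mem_filter.mp hj).2
      (Ideal.pow_mem_pow (Ideal.mem_span_singleton_self P) j)
  choose c hc using fun i => IsPrecomplete.prec ‹_› (hcauchy i)
  refine ⟨c, ((IsHausdorff.eq_iff_smodEq (I := Ideal.span {P})).mpr fun n => ?_).symm⟩
  rw [SModEq.sub_mem]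
  have hdiff : x - ∑ i, c i • w i = P ^ n • y^[n] x + ∑ i, (f n i - c i) • w i := by
    conv_lhs => rw [hf n]
    simp only [sub_smul, Finset.sum_sub_distrib]
    abel
  have hP : P ^ n ∈ Ideal.span {P} ^ n := Ideal.pow_mem_pow (Ideal.mem_span_singleton_self P) n
  rw [hdiff]
  refine add_mem (Submodule.smul_mem_smul hP trivial)
    (Submodule.sum_mem _ fun i _ => Submodule.smul_mem_smul ?_ trivial)
  simpa [SModEq.sub_mem, Ideal.smul_eq_mul, Ideal.mul_top] using hc i n

theorem Algebra.FormallyUnramified.of_forall_exists_eq_pow_add_mul {R S : Type*} [CommRing R]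
    [CommRing S] [Algebra R S] [Algebra.FiniteType R S] (n : ℕ)
    (hn : Ideal.span {(n : S)} ≤ (⊥ : Ideal S).jacobson)
    (h : ∀ w : S, ∃ v c : S, w = v ^ n + n * c) : Algebra.FormallyUnramified R S := by
  have hD : ∀ w : S,
      KaehlerDifferential.D R S w ∈ Ideal.span {(n : S)} • (⊤ : Submodule S Ω[S⁄R]) := by
    intro w
    obtain ⟨v, c, rfl⟩ := h w
    have hmem : (n : S) ∈ Ideal.span {(n : S)} := Ideal.mem_span_singleton_self _
    rw [map_add, Derivation.leibniz_pow, Derivation.leibniz, Derivation.map_natCast, smul_zero,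
      add_zero, ← Nat.cast_smul_eq_nsmul S, smul_smul]
    exact add_mem (Submodule.smul_mem_smul (Ideal.mul_mem_right _ _ hmem) trivial)
      (Submodule.smul_mem_smul hmem trivial)
  have hΩ : (⊤ : Submodule S Ω[S⁄R]) = ⊥ := by
    refine Submodule.eq_bot_of_le_smul_of_le_jacobson_bot _ _ (Module.finite_def.mp inferInstance)
      ?_ hn
    conv_lhs => rw [← KaehlerDifferential.span_range_derivation R S]
    rw [Submodule.span_le]
    rintro _ ⟨w, rfl⟩
    exact hD w
  exact ⟨(Submodule.subsingleton_iff S).mp (subsingleton_of_bot_eq_top hΩ.symm)⟩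

namespace WittVector

variable {K : Type*} [CommRing K] [CharP K p] [PerfectRing K p]

theorem exists_eq_teichmuller_add_p_mul (x : WittVector p K) :
    ∃ y, x = teichmuller p (x.coeff 0) + p * y := by
  have : x - teichmuller p (x.coeff 0) ∈ Ideal.span {(p : WittVector p K)} := by
    rw [mem_span_p_iff_coeff_zero_eq_zero, ← constantCoeff_apply, map_sub, constantCoeff_apply,
      constantCoeff_apply, teichmuller_coeff_zero, sub_self]
  obtain ⟨y, hy⟩ := Ideal.mem_span_singleton'.mp this
  exact ⟨y, by rw [mul_comm, hy]; ring⟩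

theorem exists_eq_pow_add_p_mul (x : WittVector p K) : ∃ v c, x = v ^ p + p * c := by
  obtain ⟨v, rfl⟩ := (frobenius_bijective p K).surjective x
  have : frobenius v - v ^ p ∈ Ideal.span {(p : WittVector p K)} := by
    rw [mem_span_p_iff_coeff_zero_eq_zero, ← constantCoeff_apply, map_sub, map_pow,
      constantCoeff_apply, constantCoeff_apply, coeff_frobenius_charP, sub_self]
  obtain ⟨c, hc⟩ := Ideal.mem_span_singleton'.mp this
  exact ⟨v, c, by rw [mul_comm, hc]; ring⟩

end WittVector

instance : IsPrecomplete (Ideal.span {(p : ℤ_[p])}) ℤ_[p] :=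
  PadicInt.maximalIdeal_eq_span_p (p := p) ▸ inferInstance

section WittVectorOverPadicInt

variable {K : Type} [Field K] [CharP K p]

theorem algebraMap_padicInt_wittVector_injective :
    Function.Injective (algebraMap ℤ_[p] (WittVector p K)) :=
  (WittVector.map_injective _ (ZMod.castHom (dvd_refl p) K).injective).comp
    (WittVector.equiv p).symm.injective

instance : Module.IsTorsionFree ℤ_[p] (WittVector p K) :=
  Module.isTorsionFree_iff_algebraMap_injective.mpr (algebraMap_padicInt_wittVector_injective p)

instance [PerfectRing K p] : IsHausdorff (Ideal.span {(p : ℤ_[p])}) (WittVector p K) := by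
  rw [← IsHausdorff.map_algebraMap_iff (S := WittVector p K), Ideal.map_span, Set.image_singleton,
    map_natCast]
  infer_instance

instance [Fintype K] : Module.Finite ℤ_[p] (WittVector p K) := by
  classical
  refine ⟨Submodule.fg_def.mpr ⟨_, Set.finite_range (WittVector.teichmuller p : K → _), ?_⟩⟩
  refine Submodule.span_range_eq_top_of_isPrecomplete (P := (p : ℤ_[p])) _ fun x => ?_
  obtain ⟨y, hy⟩ := WittVector.exists_eq_teichmuller_add_p_mul p x
  refine ⟨Pi.single (x.coeff 0) 1, y, ?_⟩
  rw [Algebra.smul_def (p : ℤ_[p]) y, map_natCast]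
  simp only [Pi.single_apply, ite_smul, one_smul, zero_smul, Finset.sum_ite_eq', Finset.mem_univ,
    if_true, ← hy]

instance [Fintype K] : Algebra.FormallyUnramified ℤ_[p] (WittVector p K) :=
  .of_forall_exists_eq_pow_add_mul p (IsAdicComplete.le_jacobson_bot _)
    (WittVector.exists_eq_pow_add_p_mul p)

end WittVectorOverPadicInt

section PowerSeriesBasis

variable {ι R B : Type*} [Fintype ι] [CommRing R] [CommRing B] [Algebra R B]

theorem PowerSeries.coeff_smul_C (f : PowerSeries R) (b : B) (n : ℕ) :
    PowerSeries.coeff n (f • PowerSeries.C b) = PowerSeries.coeff n f • b := by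
  rw [Algebra.smul_def, PowerSeries.coeff_mul_C, PowerSeries.algebraMap_apply'',
    PowerSeries.coeff_map, Algebra.smul_def]

def Module.Basis.powerSeries (b : Module.Basis ι R B) :
    Module.Basis ι (PowerSeries R) (PowerSeries B) := by
  refine .mk (v := fun i => PowerSeries.C (b i)) ?_ fun f _ => ?_
  · refine Fintype.linearIndependent_iff.mpr fun g hg i => PowerSeries.ext fun n => ?_
    have := congrArg (PowerSeries.coeff n) hg
    simp only [map_sum, PowerSeries.coeff_smul_C, map_zero] at this
    simpa using Fintype.linearIndependent_iff.mp b.linearIndependent _ this i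
  · have hf : f = ∑ i, PowerSeries.mk (fun n => b.repr (PowerSeries.coeff n f) i) •
        PowerSeries.C (b i) := by
      ext n
      simp only [map_sum, PowerSeries.coeff_smul_C, PowerSeries.coeff_mk]
      exact (b.sum_repr _).symm
    rw [hf]
    exact Submodule.sum_mem _ fun i _ => Submodule.smul_mem _ _ (Submodule.subset_span ⟨i, rfl⟩)

@[simp]
theorem Module.Basis.powerSeries_apply (b : Module.Basis ι R B) (i : ι) :
    b.powerSeries i = PowerSeries.C (b i) :=
  Module.Basis.mk_apply _ _ _

end PowerSeriesBasis

instance PowerSeries.isScalarTower_powerSeries {R A B : Type*} [CommSemiring R] [CommSemiring A]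
    [CommSemiring B] [Algebra R A] [Algebra R B] [Algebra A B] [IsScalarTower R A B] :
    IsScalarTower R (PowerSeries A) (PowerSeries B) :=
  .of_algebraMap_eq fun r => by
    rw [PowerSeries.algebraMap_apply'', PowerSeries.algebraMap_apply, PowerSeries.algebraMap_apply,
      PowerSeries.map_C, ← IsScalarTower.algebraMap_apply]

section

-- With `A` acting on `W(k') ⊗ A` through the right factor, `algebraMap A⟦u⟧ 𝔖_A` is `AuToSS`.
attribute [local instance] Algebra.TensorProduct.rightAlgebra

def wittTensorBasis :
    Module.Basis (Module.Free.ChooseBasisIndex ℤ_[p] (WittVector p k')) A (WW p k' A) :=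
  ((Module.Free.chooseBasis ℤ_[p] (WittVector p k')).baseChange A).map
    (Algebra.TensorProduct.commRight ℤ_[p] A (WittVector p k')).toLinearEquiv

theorem wittTensorBasis_apply (i : Module.Free.ChooseBasisIndex ℤ_[p] (WittVector p k')) :
    wittTensorBasis p k' A i = Module.Free.chooseBasis ℤ_[p] (WittVector p k') i ⊗ₜ 1 := by
  simp [wittTensorBasis]

def powerSeriesTensorWittAlgHom :
    PowerSeries A ⊗[ℤ_[p]] WittVector p k' →ₐ[PowerSeries A] SS p k' A :=
  Algebra.TensorProduct.lift (Algebra.ofId _ _) (IsScalarTower.toAlgHom ℤ_[p] _ _)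
    fun _ _ => .all _ _

theorem powerSeriesTensorWittAlgHom_bijective :
    Function.Bijective (powerSeriesTensorWittAlgHom p k' A) := by
  let b := (Module.Free.chooseBasis ℤ_[p] (WittVector p k')).baseChange (PowerSeries A)
  let e := b.equiv (wittTensorBasis p k' A).powerSeries (Equiv.refl _)
  have : (powerSeriesTensorWittAlgHom p k' A).toLinearMap = e.toLinearMap := by
    refine b.ext fun i => ?_
    rw [LinearEquiv.coe_coe, Module.Basis.equiv_apply, Equiv.refl_apply,
      Module.Basis.powerSeries_apply, wittTensorBasis_apply, AlgHom.toLinearMap_apply,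
      Module.Basis.baseChange_apply, powerSeriesTensorWittAlgHom, Algebra.TensorProduct.lift_tmul,
      map_one, one_mul, IsScalarTower.toAlgHom_apply, PowerSeries.algebraMap_apply,
      Algebra.TensorProduct.algebraMap_apply, Algebra.algebraMap_self_apply]
  rw [← AlgHom.coe_toLinearMap, this]
  exact e.bijective

instance : Module.Free (PowerSeries A) (SS p k' A) :=
  .of_basis (wittTensorBasis p k' A).powerSeries

instance : Module.Finite (PowerSeries A) (SS p k' A) :=
  .of_basis (wittTensorBasis p k' A).powerSeries

instance : Algebra.FormallyUnramified (PowerSeries A) (SS p k' A) :=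
  .of_equiv (AlgEquiv.ofBijective _ (powerSeriesTensorWittAlgHom_bijective p k' A))

end

theorem statement_0
    (M : Type) [AddCommGroup M] [Module (SS p k' A) M] :
    letI : Module (PowerSeries A) M := Module.compHom M (AuToSS p k' A)
    (Module.Projective (SS p k' A) M ↔ Module.Projective (PowerSeries A) M) := by
  let := Algebra.TensorProduct.rightAlgebra (R := ℤ_[p]) (A := WittVector p k') (B := A)
  let : Module (PowerSeries A) M := Module.compHom M (AuToSS p k' A)
  have : IsScalarTower (PowerSeries A) (SS p k' A) M :=
    ⟨fun r s m => mul_smul (AuToSS p k' A r) s m⟩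
  exact ⟨fun _ => .trans (PowerSeries A) (SS p k' A) M,
    fun _ => Algebra.FormallyUnramified.projective_of_restrictScalars (PowerSeries A) (SS p k' A) M⟩
end
end

section
/- Let A be a p-adically complete Z_p-algebra and E(u) ∈ W(k')[u] an Eisenstein polynomial. Then the image of E(u) in S_A is a non-zero-divisor. -/
/-!
`W(k')` is a finite free `ℤ_p`-module: it is `p`-adically separated and the Teichmüller lifts
of the elements of `k'` span `W(k')/p`, so complete Nakayama applies, and it is torsion free over
the PID `ℤ_p`. Hence `W(k') ⊗ A` embeds `ℤ_p`-linearly into a product of copies of `A` and is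
`p`-adically separated. Over such a ring an Eisenstein polynomial is distinguished (monic with
non-leading coefficients in `(p)`), hence a Weierstrass divisor, and uniqueness of Weierstrass
division says exactly that it is a non-zero-divisor in the power series ring.
-/

open scoped TensorProduct
open PowerSeries

noncomputable section

variable (p : ℕ) [Fact p.Prime]
variable (k' : Type) [Field k'] [Fintype k'] [CharP k' p]

section AdicHausdorff

variable {R : Type*} [CommRing R] {I : Ideal R}

theorem Submodule.mem_smul_top_pi_iff {ι : Type*} [Finite ι] {M : ι → Type*}
    [∀ i, AddCommGroup (M i)] [∀ i, Module R (M i)] (J : Ideal R) (x : ∀ i, M i) :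
    x ∈ J • (⊤ : Submodule R (∀ i, M i)) ↔ ∀ i, x i ∈ J • (⊤ : Submodule R (M i)) := by
  classical
  have := Fintype.ofFinite ι
  refine ⟨fun hx i => Submodule.smul_top_le_comap_smul_top J (LinearMap.proj i) hx, fun hx => ?_⟩
  rw [← Finset.univ_sum_single x]
  exact Submodule.sum_mem _ fun i _ =>
    Submodule.smul_top_le_comap_smul_top J (LinearMap.single R M i) (hx i)

theorem IsHausdorff.of_injective {M N : Type*} [AddCommGroup M] [Module R M] [AddCommGroup N]
    [Module R N] [IsHausdorff I N] (f : M →ₗ[R] N) (hf : Function.Injective f) : IsHausdorff I M :=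
  ⟨fun x hx => hf <| by
    rw [map_zero]
    refine IsHausdorff.haus' (I := I) (f x) fun n => ?_
    simpa [SModEq.zero] using
      Submodule.smul_top_le_comap_smul_top (I ^ n) f (SModEq.zero.mp (hx n))⟩

instance IsHausdorff.pi {ι : Type*} {M : ι → Type*} [∀ i, AddCommGroup (M i)]
    [∀ i, Module R (M i)] [∀ i, IsHausdorff I (M i)] : IsHausdorff I (∀ i, M i) :=
  ⟨fun x hx => _root_.funext fun i => IsHausdorff.haus' (I := I) (x i) fun n => by
    simpa [SModEq.zero] using
      Submodule.smul_top_le_comap_smul_top (I ^ n) (LinearMap.proj i) (SModEq.zero.mp (hx n))⟩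

instance IsPrecomplete.pi {ι : Type*} [Finite ι] {M : ι → Type*} [∀ i, AddCommGroup (M i)]
    [∀ i, Module R (M i)] [∀ i, IsPrecomplete I (M i)] : IsPrecomplete I (∀ i, M i) := by
  refine ⟨fun f hf => ?_⟩
  have hcomp (i : ι) {m n : ℕ} (h : m ≤ n) :
      f m i ≡ f n i [SMOD (I ^ m • ⊤ : Submodule R (M i))] := by
    rw [SModEq.sub_mem]
    exact (Submodule.mem_smul_top_pi_iff _ _).mp (SModEq.sub_mem.mp (hf h)) i
  choose L hL using fun i => IsPrecomplete.prec' (I := I) _ (hcomp i)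
  refine ⟨L, fun n => ?_⟩
  rw [SModEq.sub_mem, Submodule.mem_smul_top_pi_iff]
  exact fun i => SModEq.sub_mem.mp (hL i n)

theorem IsHausdorff.tensorProduct_of_free {M N : Type*} [AddCommGroup M] [Module R M]
    [Module.Free R M] [AddCommGroup N] [Module R N] [IsHausdorff I N] :
    IsHausdorff I (M ⊗[R] N) :=
  let e := (TensorProduct.congr (Module.Free.chooseBasis R M).repr (LinearEquiv.refl R N)).trans
    (TensorProduct.finsuppScalarLeft R N _)
  .of_injective ((Finsupp.lcoeFun).comp e.toLinearMap) (DFunLike.coe_injective.comp e.injective)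

theorem isHausdorff_span_natCast_iff {S M : Type*} [CommRing S] [Algebra R S] [AddCommGroup M]
    [Module R M] [Module S M] [IsScalarTower R S M] (n : ℕ) :
    IsHausdorff (Ideal.span {(n : S)}) M ↔ IsHausdorff (Ideal.span {(n : R)}) M := by
  rw [← IsHausdorff.map_algebraMap_iff (R := R) (S := S) (I := Ideal.span {(n : R)}),
    Ideal.map_span, Set.image_singleton, map_natCast]

end AdicHausdorff

theorem Polynomial.IsDistinguishedAt.map {R S : Type*} [CommRing R] [CommRing S]
    {f : Polynomial R} {I : Ideal R} (H : f.IsDistinguishedAt I) (φ : R →+* S) :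
    (f.map φ).IsDistinguishedAt (I.map φ) :=
  ⟨H.toIsWeaklyEisensteinAt.map φ, H.monic.map φ⟩

theorem Polynomial.IsDistinguishedAt.coe_mem_nonZeroDivisors {R : Type*} [CommRing R]
    {f : Polynomial R} {I : Ideal R} [IsHausdorff I R] (H : f.IsDistinguishedAt I) :
    (f : R⟦X⟧) ∈ nonZeroDivisors R⟦X⟧ :=
  mem_nonZeroDivisors_iff_right.mpr fun q hq =>
    (H.isWeierstrassDivisorAt'.eq_zero_of_mul_eq (r := 0) (by simp)
      (by simpa [mul_comm] using hq)).1

theorem zpToWitt_injective {p : ℕ} [Fact p.Prime] {k' : Type} [Field k'] [CharP k' p] :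
    Function.Injective (zpToWitt p k') :=
  (WittVector.map_injective _ (ZMod.castHom (dvd_refl p) k').injective).comp
    (WittVector.equiv p).symm.injective

instance WittVector.isTorsionFree_padicInt {p : ℕ} [Fact p.Prime] {k' : Type} [Field k']
    [CharP k' p] : Module.IsTorsionFree ℤ_[p] (WittVector p k') :=
  Module.isTorsionFree_iff_algebraMap_injective.mpr zpToWitt_injective

instance WittVector.finite_padicInt : Module.Finite ℤ_[p] (WittVector p k') := by
  classical
  have : IsHausdorff (IsLocalRing.maximalIdeal ℤ_[p]) (WittVector p k') := by
    rw [PadicInt.maximalIdeal_eq_span_p, ← isHausdorff_span_natCast_iff (S := WittVector p k')]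
    infer_instance
  let f := Fintype.linearCombination ℤ_[p] (fun a : k' => WittVector.teichmuller p a)
  refine Module.Finite.of_surjective f (surjective_of_mkQ_comp_surjective
    (I := IsLocalRing.maximalIdeal ℤ_[p]) fun y => ?_)
  obtain ⟨x, rfl⟩ := Submodule.mkQ_surjective _ y
  refine ⟨Pi.single (x.coeff 0) 1, (Submodule.Quotient.eq _).mpr ?_⟩
  have hpx : f (Pi.single (x.coeff 0) 1) - x ∈ Ideal.span {(p : WittVector p k')} := by
    rw [← WittVector.ker_constantCoeff, RingHom.mem_ker, map_sub, sub_eq_zero]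
    simp [f, Fintype.linearCombination_apply_single]
  obtain ⟨y, hy⟩ := Ideal.mem_span_singleton'.mp hpx
  rw [← hy, mul_comm, ← map_natCast (algebraMap ℤ_[p] (WittVector p k')), ← Algebra.smul_def,
    PadicInt.maximalIdeal_eq_span_p]
  exact Submodule.smul_mem_smul (Ideal.mem_span_singleton_self _) trivial

theorem isHausdorff_WW (A : Type) [CommRing A] [Algebra ℤ_[p] A]
    (hA : IsHausdorff (Ideal.span {(p : A)}) A) :
    IsHausdorff (Ideal.span {(p : WW p k' A)}) (WW p k' A) := by
  rw [isHausdorff_span_natCast_iff (R := ℤ_[p])] at hA ⊢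
  exact IsHausdorff.tensorProduct_of_free

theorem IsEisenstein.isDistinguishedAt {p : ℕ} [Fact p.Prime] {k' : Type} [Field k'] {e' : ℕ}
    {E : Polynomial (WittVector p k')} (hE : IsEisenstein p k' e' E) :
    E.IsDistinguishedAt (Ideal.span {(p : WittVector p k')}) := by
  obtain ⟨hmonic, hdeg, -, hcoeff, -⟩ := hE
  exact ⟨⟨fun hn => hcoeff _ (hdeg ▸ hn)⟩, hmonic⟩

theorem polyToSS_eq_coe_map {p : ℕ} [Fact p.Prime] {k' : Type} [Field k'] [CharP k' p]
    (R : Type) [CommRing R] [Algebra ℤ_[p] R] (E : Polynomial (WittVector p k')) :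
    polyToSS p k' R E =
      (E.map Algebra.TensorProduct.includeLeftRingHom : Polynomial (WW p k' R)) := by
  ext n
  simp [polyToSS]

variable (A : Type) [CommRing A] [Algebra ℤ_[p] A]

/-- Let `A` be a `p`-adically complete `ℤ_p`-algebra and `E(u) ∈ W(k')[u]`
an Eisenstein polynomial.  Then the image of `E(u)` in `𝔖_A` is a non-zero-divisor. -/
theorem statement_2
    (hA : IsAdicComplete (Ideal.span {(p : A)}) A)
    (e' : ℕ) (E : Polynomial (WittVector p k')) (hE : IsEisenstein p k' e' E) :
    polyToSS p k' A E ∈ nonZeroDivisors (SS p k' A) := by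
  have := isHausdorff_WW p k' A hA.toIsHausdorff
  have hdist := hE.isDistinguishedAt.map
    (Algebra.TensorProduct.includeLeftRingHom (R := ℤ_[p]) (B := A))
  rw [Ideal.map_span, Set.image_singleton, map_natCast] at hdist
  rw [polyToSS_eq_coe_map]
  exact hdist.coe_mem_nonZeroDivisors
end
end

section
/- Let A be a commutative ring, M a finitely generated projective A[[u]]-module, and B an A-algebra. Then the natural map M ⊗_A B → M ⊗_{A[[u]]} B[[u]] exhibits M ⊗_{A[[u]]} B[[u]] as the u-adic completion of M ⊗_A B: the induced B[[u]]-linear map lim_n (M ⊗_A B)/u^n(M ⊗_A B) → M ⊗_{A[[u]]} B[[u]] is an isomorphism. In particular, the u-adic completion of M ⊗_A B is a finitely generated projective B[[u]]-module. -/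
open scoped TensorProduct
open PowerSeries

noncomputable section

/-!
Completeness: `B⟦X⟧ ⊗ M` is finite projective over the `X`-adically complete ring `B⟦X⟧`,
hence a retract of some `B⟦X⟧ᵏ`, and adic completeness passes to finite products and to
retracts.

Modulo `Xⁿ`: the inverse of `B ⊗_A M / Xⁿ → B⟦X⟧ ⊗_{A⟦X⟧} M / Xⁿ` sends `f ⊗ m` to
`∑_{i<n} fᵢ ⊗ Xⁱ m`. The only real work is that this is `A⟦X⟧`-balanced. The `s` for which
balancedness holds are closed under sums and products and contain the constants, `X` and
`Xⁿ A⟦X⟧`; since `s = Xⁿ r + trunc_n s`, they are everything.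
-/

namespace IsAdicComplete

variable {R : Type*} [CommRing R] (I : Ideal R)

theorem of_retract {M N : Type*} [AddCommGroup M] [Module R M] [AddCommGroup N] [Module R N]
    [IsAdicComplete I N] (σ : M →ₗ[R] N) (π : N →ₗ[R] M) (hπσ : π ∘ₗ σ = LinearMap.id) :
    IsAdicComplete I M := by
  have hσ : Function.Injective σ :=
    Function.LeftInverse.injective (g := π) (LinearMap.ext_iff.1 hπσ)
  rw [← AdicCompletion.of_bijective_iff]
  refine ⟨fun x y hxy => hσ (AdicCompletion.of_injective I N ?_), fun y => ?_⟩
  · rw [← AdicCompletion.map_of, ← AdicCompletion.map_of, hxy]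
  · obtain ⟨z, hz⟩ := AdicCompletion.of_surjective I N (AdicCompletion.map I σ y)
    refine ⟨π z, ?_⟩
    rw [← AdicCompletion.map_of, hz, AdicCompletion.map_comp_apply, hπσ,
      AdicCompletion.map_id, LinearMap.id_apply]

instance pi {ι : Type*} [Finite ι] (M : ι → Type*) [∀ i, AddCommGroup (M i)] [∀ i, Module R (M i)]
    [∀ i, IsAdicComplete I (M i)] : IsAdicComplete I (∀ i, M i) := by
  classical
  have := Fintype.ofFinite ι
  rw [← AdicCompletion.of_bijective_iff]
  have hpi : ⇑(AdicCompletion.piEquivOfFintype I M) ∘ AdicCompletion.of I (∀ i, M i) =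
      Pi.map fun i => AdicCompletion.of I (M i) := by
    ext x i
    simp
  have hof : Function.Bijective (Pi.map fun i => AdicCompletion.of I (M i)) :=
    Function.Bijective.piMap fun i => AdicCompletion.of_bijective_iff.2 inferInstance
  rw [← hpi] at hof
  exact (Function.Bijective.of_comp_iff' (AdicCompletion.piEquivOfFintype I M).bijective _).1 hof

theorem of_finite_of_projective [IsAdicComplete I R] (P : Type*) [AddCommGroup P] [Module R P]
    [Module.Finite R P] [Module.Projective R P] : IsAdicComplete I P := by
  obtain ⟨k, π, hπ⟩ := Module.Finite.exists_fin' R P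
  obtain ⟨σ, hσ⟩ := Module.projective_lifting_property π LinearMap.id hπ
  exact of_retract I σ π hσ

end IsAdicComplete

namespace PowerSeries

section TruncTensor

variable {A B M : Type*} [CommRing A] [CommRing B] [Algebra A B]
  [AddCommGroup M] [Module A⟦X⟧ M] [Module A M] (n : ℕ)

variable (A B M) in
def tmulXPowSubgroup : AddSubgroup (B ⊗[A] M) :=
  AddSubgroup.closure {x | ∃ (b : B) (m : M), x = b ⊗ₜ[A] ((X : A⟦X⟧) ^ n • m)}

theorem tmul_X_pow_smul_mem {i : ℕ} (hi : n ≤ i) (b : B) (m : M) :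
    b ⊗ₜ[A] ((X : A⟦X⟧) ^ i • m) ∈ tmulXPowSubgroup A B M n := by
  refine AddSubgroup.subset_closure ⟨b, (X : A⟦X⟧) ^ (i - n) • m, ?_⟩
  rw [smul_smul, ← pow_add, Nat.add_sub_cancel' hi]

variable (A B M) in
def xPowSmulSubgroup : AddSubgroup (B⟦X⟧ ⊗[A⟦X⟧] M) :=
  AddSubgroup.closure {y | ∃ z, y = (X : B⟦X⟧) ^ n • z}

variable (A) in
def truncTmul (f : B⟦X⟧) (m : M) : B ⊗[A] M :=
  ∑ i ∈ Finset.range n, coeff i f ⊗ₜ[A] ((X : A⟦X⟧) ^ i • m)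

theorem truncTmul_add_left (f f' : B⟦X⟧) (m : M) :
    truncTmul A n (f + f') m = truncTmul A n f m + truncTmul A n f' m := by
  simp only [truncTmul, map_add, TensorProduct.add_tmul, Finset.sum_add_distrib]

theorem truncTmul_add_right (f : B⟦X⟧) (m m' : M) :
    truncTmul A n f (m + m') = truncTmul A n f m + truncTmul A n f m' := by
  simp only [truncTmul, smul_add, TensorProduct.tmul_add, Finset.sum_add_distrib]

theorem truncTmul_X_pow_mul (f : B⟦X⟧) (m : M) : truncTmul A n (X ^ n * f) m = 0 := by
  refine Finset.sum_eq_zero fun i hi => ?_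
  rw [coeff_X_pow_mul', if_neg (by simpa using hi), TensorProduct.zero_tmul]

theorem truncTmul_smul_X_pow_mul_mem (f : B⟦X⟧) (s : A⟦X⟧) (m : M) :
    truncTmul A n f ((X ^ n * s) • m) ∈ tmulXPowSubgroup A B M n := by
  refine AddSubgroup.sum_mem _ fun i _ => ?_
  rw [smul_smul, ← mul_assoc, ← pow_add, mul_smul]
  exact tmul_X_pow_smul_mem n (Nat.le_add_left n i) _ _

theorem truncTmul_succ_sub_mem (f : B⟦X⟧) (m : M) :
    truncTmul A (n + 1) f m - truncTmul A n f m ∈ tmulXPowSubgroup A B M n := by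
  simp only [truncTmul, Finset.sum_range_succ, add_sub_cancel_left]
  exact tmul_X_pow_smul_mem n le_rfl _ _

theorem truncTmul_succ_X_mul (f : B⟦X⟧) (m : M) :
    truncTmul A (n + 1) (X * f) m = truncTmul A n f ((X : A⟦X⟧) • m) := by
  simp only [truncTmul, Finset.sum_range_succ', coeff_succ_X_mul, coeff_zero_X_mul,
    TensorProduct.zero_tmul, add_zero, smul_smul, ← pow_succ]

theorem mk_truncTmul_C (b : B) (m : M) :
    (QuotientAddGroup.mk (truncTmul A n (C b) m) : B ⊗[A] M ⧸ tmulXPowSubgroup A B M n) =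
      QuotientAddGroup.mk (b ⊗ₜ m) := by
  cases n with
  | zero =>
    rw [eq_comm, QuotientAddGroup.eq_iff_sub_mem, truncTmul, Finset.sum_range_zero, sub_zero]
    simpa using tmul_X_pow_smul_mem 0 le_rfl b m
  | succ n =>
    rw [truncTmul, Finset.sum_range_succ']
    simp [coeff_C]

theorem tmul_sub_truncTmul_mem_xPowSmulSubgroup (g : B ⊗[A] M →+ B⟦X⟧ ⊗[A⟦X⟧] M)
    (hg : ∀ b m, g (b ⊗ₜ m) = C b ⊗ₜ m) (f : B⟦X⟧) (m : M) :
    f ⊗ₜ m - g (truncTmul A n f m) ∈ xPowSmulSubgroup A B M n := by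
  have hg_trunc : g (truncTmul A n f m) = (trunc n f : B⟦X⟧) ⊗ₜ m := by
    rw [← Polynomial.eval₂_C_X_eq_coe, eval₂_trunc_eq_sum_range, TensorProduct.sum_tmul, truncTmul,
      map_sum]
    refine Finset.sum_congr rfl fun i _ => ?_
    rw [hg, ← TensorProduct.smul_tmul, Algebra.smul_def, algebraMap_apply'', map_pow, map_X,
      mul_comm]
  rw [hg_trunc]
  nth_rw 1 [eq_X_pow_mul_shift_add_trunc n f]
  rw [TensorProduct.add_tmul, add_sub_cancel_right, ← smul_eq_mul, ← TensorProduct.smul_tmul']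
  exact AddSubgroup.subset_closure ⟨_, rfl⟩

variable (B M) in
def TruncBalanced (s : A⟦X⟧) : Prop :=
  ∀ (f : B⟦X⟧) (m : M),
    truncTmul A n (map (algebraMap A B) s * f) m - truncTmul A n f (s • m) ∈
      tmulXPowSubgroup A B M n

theorem TruncBalanced.add {s t : A⟦X⟧} (hs : TruncBalanced B M n s) (ht : TruncBalanced B M n t) :
    TruncBalanced B M n (s + t) := fun f m => by
  rw [map_add, add_mul, add_smul, truncTmul_add_left, truncTmul_add_right, add_sub_add_comm]
  exact add_mem (hs f m) (ht f m)

theorem TruncBalanced.mul {s t : A⟦X⟧} (hs : TruncBalanced B M n s) (ht : TruncBalanced B M n t) :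
    TruncBalanced B M n (s * t) := fun f m => by
  rw [← sub_add_sub_cancel _ (truncTmul A n (map (algebraMap A B) t * f) (s • m)), map_mul,
    mul_assoc, mul_comm s, mul_smul]
  exact add_mem (hs _ m) (ht f _)

theorem truncBalanced_X : TruncBalanced B M n (X : A⟦X⟧) := fun f m => by
  rw [map_X, ← truncTmul_succ_X_mul, ← neg_sub]
  exact neg_mem (truncTmul_succ_sub_mem n _ m)

theorem truncBalanced_X_pow_mul (s : A⟦X⟧) : TruncBalanced B M n (X ^ n * s) := fun f m => by
  rw [map_mul, map_pow, map_X, mul_assoc, truncTmul_X_pow_mul, zero_sub]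
  exact neg_mem (truncTmul_smul_X_pow_mul_mem n f s m)

variable [IsScalarTower A A⟦X⟧ M]

theorem truncTmul_C_mul (a : A) (f : B⟦X⟧) (m : M) :
    truncTmul A n (C (algebraMap A B a) * f) m = truncTmul A n f (C a • m) := by
  refine Finset.sum_congr rfl fun i _ => ?_
  rw [coeff_C_mul, ← Algebra.smul_def, TensorProduct.smul_tmul, smul_comm]
  exact congrArg _ (congrArg _ (algebraMap_smul A⟦X⟧ a m).symm)

theorem truncBalanced_C (a : A) : TruncBalanced B M n (C a) := fun f m => by
  rw [map_C, truncTmul_C_mul, sub_self]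
  exact zero_mem _

theorem truncBalanced_coe (p : Polynomial A) :
    TruncBalanced B M n (p : A⟦X⟧) := by
  induction p using Polynomial.induction_on with
  | C a => simpa using truncBalanced_C n a
  | add p q hp hq => simpa using hp.add n hq
  | monomial k a h =>
    rw [pow_succ, ← mul_assoc, Polynomial.coe_mul, Polynomial.coe_X]
    exact h.mul n (truncBalanced_X n)

theorem truncBalanced (s : A⟦X⟧) : TruncBalanced B M n s := by
  rw [eq_X_pow_mul_shift_add_trunc n s]
  exact (truncBalanced_X_pow_mul n _).add n (truncBalanced_coe n _)

def truncTensorHom : B⟦X⟧ ⊗[A⟦X⟧] M →+ B ⊗[A] M ⧸ tmulXPowSubgroup A B M n :=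
  TensorProduct.liftAddHom
    (AddMonoidHom.mk'
      (fun f => (QuotientAddGroup.mk' _).comp
        (AddMonoidHom.mk' (truncTmul A n f) (truncTmul_add_right n f)))
      fun f f' => AddMonoidHom.ext fun m => by simp [truncTmul_add_left])
    fun s f m => (QuotientAddGroup.eq_iff_sub_mem).2 (truncBalanced n s f m)

theorem truncTensorHom_tmul (f : B⟦X⟧) (m : M) :
    truncTensorHom n (f ⊗ₜ m) = QuotientAddGroup.mk (truncTmul A n f m) :=
  rfl

theorem xPowSmulSubgroup_le_ker : xPowSmulSubgroup A B M n ≤ (truncTensorHom n).ker := by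
  rw [xPowSmulSubgroup, AddSubgroup.closure_le]
  rintro _ ⟨z, rfl⟩
  induction z using TensorProduct.induction_on with
  | zero => simp
  | tmul f m =>
    rw [SetLike.mem_coe, AddMonoidHom.mem_ker, TensorProduct.smul_tmul', smul_eq_mul,
      truncTensorHom_tmul, truncTmul_X_pow_mul, QuotientAddGroup.mk_zero]
  | add z z' hz hz' => rw [smul_add]; exact add_mem hz hz'

def truncTensorQuotHom :
    B⟦X⟧ ⊗[A⟦X⟧] M ⧸ xPowSmulSubgroup A B M n →+ B ⊗[A] M ⧸ tmulXPowSubgroup A B M n :=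
  QuotientAddGroup.lift _ (truncTensorHom n) (xPowSmulSubgroup_le_ker n)

theorem bijective_of_comp_mk (g : B ⊗[A] M →+ B⟦X⟧ ⊗[A⟦X⟧] M)
    (hg : ∀ b m, g (b ⊗ₜ m) = C b ⊗ₜ m)
    (φ : B ⊗[A] M ⧸ tmulXPowSubgroup A B M n →+ B⟦X⟧ ⊗[A⟦X⟧] M ⧸ xPowSmulSubgroup A B M n)
    (hφ : ∀ x, φ (QuotientAddGroup.mk x) = QuotientAddGroup.mk (g x)) :
    Function.Bijective φ := by
  refine Function.bijective_iff_has_inverse.2 ⟨truncTensorQuotHom n, fun x => ?_, fun y => ?_⟩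
  · induction x using QuotientAddGroup.induction_on with | H x => ?_
    rw [hφ]
    induction x using TensorProduct.induction_on with
    | zero => simp
    | tmul b m => exact (congrArg _ (hg b m)).trans (mk_truncTmul_C n b m)
    | add x x' hx hx' => simp_all
  · induction y using QuotientAddGroup.induction_on with | H y => ?_
    induction y using TensorProduct.induction_on with
    | zero => simp
    | tmul f m =>
      refine (hφ _).trans ((QuotientAddGroup.eq_iff_sub_mem).2 ?_)
      rw [← neg_mem_iff, neg_sub]
      exact tmul_sub_truncTmul_mem_xPowSmulSubgroup n g hg f m
    | add y y' hy hy' => simp_all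

end TruncTensor

end PowerSeries

/-- Let `A` be a commutative ring, `M` a finitely generated projective
`A⟦u⟧`-module, and `B` an `A`-algebra.  Then the natural map
`M ⊗_A B → M ⊗_{A⟦u⟧} B⟦u⟧` exhibits `M ⊗_{A⟦u⟧} B⟦u⟧` as the `u`-adic completion of
`M ⊗_A B`:  `M ⊗_{A⟦u⟧} B⟦u⟧` is `u`-adically complete, and the natural map induces an
isomorphism `(M ⊗_A B)/u^n(M ⊗_A B) ≅ (M ⊗_{A⟦u⟧} B⟦u⟧)/u^n(M ⊗_{A⟦u⟧} B⟦u⟧)` for every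
`n` (equivalently, the induced `B⟦u⟧`-linear map
`lim_n (M ⊗_A B)/u^n(M ⊗_A B) → M ⊗_{A⟦u⟧} B⟦u⟧` is an isomorphism).  In particular, the
`u`-adic completion of `M ⊗_A B` is a finitely generated projective `B⟦u⟧`-module. -/
theorem statement_3
    (A : Type) [CommRing A]
    (M : Type) [AddCommGroup M] [Module (PowerSeries A) M]
    [Module.Finite (PowerSeries A) M] [Module.Projective (PowerSeries A) M]
    (B : Type) [CommRing B] [Algebra A B] :
    letI : Module A M := Module.compHom M (PowerSeries.C (R := A))
    letI : Algebra (PowerSeries A) (PowerSeries B) :=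
      (PowerSeries.map (algebraMap A B)).toAlgebra
    (Module.Finite (PowerSeries B) (TensorProduct (PowerSeries A) (PowerSeries B) M) ∧
      Module.Projective (PowerSeries B) (TensorProduct (PowerSeries A) (PowerSeries B) M)) ∧
    ∀ (g : TensorProduct A B M →+ TensorProduct (PowerSeries A) (PowerSeries B) M),
      (∀ (b : B) (m : M), g (b ⊗ₜ[A] m) = (PowerSeries.C (R := B) b) ⊗ₜ[PowerSeries A] m) →
      (IsAdicComplete (Ideal.span {(PowerSeries.X : PowerSeries B)})
          (TensorProduct (PowerSeries A) (PowerSeries B) M) ∧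
        ∀ (n : ℕ)
          (tb : (TensorProduct A B M ⧸
              AddSubgroup.closure {x : TensorProduct A B M |
                ∃ (b : B) (m : M), x = b ⊗ₜ[A] ((PowerSeries.X : PowerSeries A) ^ n • m)}) →+
            ((TensorProduct (PowerSeries A) (PowerSeries B) M) ⧸
              AddSubgroup.closure {y : TensorProduct (PowerSeries A) (PowerSeries B) M |
                ∃ z, y = (PowerSeries.X : PowerSeries B) ^ n • z})),
          (∀ x : TensorProduct A B M,
            tb (QuotientAddGroup.mk x) = QuotientAddGroup.mk (g x)) →
          Function.Bijective ⇑tb) := by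
  let _ : Module A M := Module.compHom M (PowerSeries.C (R := A))
  have : IsScalarTower A (PowerSeries A) M := IsScalarTower.of_algebraMap_smul fun _ _ => rfl
  exact ⟨⟨inferInstance, inferInstance⟩, fun g hg =>
    ⟨IsAdicComplete.of_finite_of_projective _ _, fun n => bijective_of_comp_mk n g hg⟩⟩
end
end

section
/- Let a ≥ 1 and let A be a Z_p-algebra with p^a = 0. Let E(u) ∈ W(k')[u] be an Eisenstein polynomial of degree e, let M be a Breuil–Kisin module with A-coefficients of height at most h, and let N be a u-adically complete, u-torsion free S_A-module equipped with an S_A-linear map Φ_N : φ*N → N. Set C^0 := Hom_{S_A}(M, N) and C^1 := Hom_{S_A}(φ*M, N), define δ : C^0 → C^1 by δ(α) := Φ_N ∘ φ*α − α ∘ Φ_M, and Φ* : C^0 → C^1 by Φ*(α) := α ∘ Φ_M. Let Q be an A-module such that C^0 ⊗_A Q and C^1 ⊗_A Q are u-torsion free and C^0 ⊗_A Q is u-adically separated. Then: (1) for every integer M₀ ≥ (eah+1)/(p−1), one has ker(δ ⊗ id_Q) ∩ u^{M₀}(C^0 ⊗_A Q) = 0; (2) for every integer N₀ ≥ (peah+1)/(p−1),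 the map δ ⊗ id_Q restricts to a bijection from {x ∈ C^0 ⊗_A Q : (Φ* ⊗ id_Q)(x) ∈ u^{N₀}(C^1 ⊗_A Q)} onto u^{N₀}(C^1 ⊗_A Q). -/
/-!
Write `T α = Φ_N ∘ α` and `Φ* α = α ∘ Φ_M`, so that `δ = T - Φ*` and `T (u^n α) = u^{pn} T α`.
Since `p^a = 0`, `E(u)` is `u^e` plus a nilpotent with `a`-th power zero, so `u^{ea} = E c`;
together with the height bound this yields `W : C¹ → C⁰` with `W ∘ Φ* = u^{eah}`, i.e. `Φ*` can be
inverted at the cost of `eah` powers of `u`.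

(1) If `δ z = 0` and `z ∈ u^n`, then `Φ* z = T z ∈ u^{pn}`, hence `z ∈ u^{pn - eah} ⊆ u^{n+1}` as
soon as `(p-1)n > eah`; so `z` lies in every `u^n` and vanishes by separatedness.

(2) Injectivity is (1) for `M₀ = N₀ - eah`. For surjectivity, already on `C⁰` the `u`-adically
convergent series `γ = -∑ₖ (u^{pm - N₀} W T)ᵏ W β` (pointwise in the complete module `N`) solves
`δ (u^m γ) = u^{N₀} β` for `m = N₀ - eah`; by (1) the solution is unique, so `β ↦ γ` is linear
and can be tensored with `Q`.
-/

open scoped TensorProduct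
open PowerSeries

noncomputable section

variable (p : ℕ) [Fact p.Prime]
variable (k' : Type) [Field k'] [Fintype k'] [CharP k' p]

variable (A : Type) [CommRing A] [Algebra ℤ_[p] A]

section AdicSum

variable {R M N : Type*} [CommRing R] [AddCommGroup M] [Module R M] [AddCommGroup N] [Module R N]
  (I : Ideal R)

def HasAdicSum (g : ℕ → N) (L : N) : Prop :=
  ∀ K, ∑ k ∈ Finset.range K, g k ≡ L [SMOD (I ^ K • ⊤ : Submodule R N)]

variable {I} {g g₁ g₂ : ℕ → N} {L L₁ L₂ : N}

theorem HasAdicSum.add (h₁ : HasAdicSum I g₁ L₁) (h₂ : HasAdicSum I g₂ L₂) :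
    HasAdicSum I (fun k => g₁ k + g₂ k) (L₁ + L₂) := fun K => by
  simpa only [Finset.sum_add_distrib] using (h₁ K).add (h₂ K)

theorem HasAdicSum.sub (h₁ : HasAdicSum I g₁ L₁) (h₂ : HasAdicSum I g₂ L₂) :
    HasAdicSum I (fun k => g₁ k - g₂ k) (L₁ - L₂) := fun K => by
  simpa only [Finset.sum_sub_distrib] using (h₁ K).sub (h₂ K)

theorem HasAdicSum.smul (h : HasAdicSum I g L) (r : R) :
    HasAdicSum I (fun k => r • g k) (r • L) := fun K => by
  simpa only [← Finset.smul_sum] using (h K).smul r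

theorem HasAdicSum.map {σ : R →+* R} {N' : Type*} [AddCommGroup N'] [Module R N']
    (f : N →ₛₗ[σ] N')
    (hf : ∀ K, ∀ y ∈ (I ^ K • ⊤ : Submodule R N), f y ∈ (I ^ K • ⊤ : Submodule R N'))
    (h : HasAdicSum I g L) : HasAdicSum I (fun k => f (g k)) (f L) := fun K => by
  simpa only [SModEq.sub_mem, ← map_sum, ← map_sub] using hf K _ (SModEq.sub_mem.mp (h K))

theorem HasAdicSum.unique [IsHausdorff I N] (h₁ : HasAdicSum I g L₁) (h₂ : HasAdicSum I g L₂) :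
    L₁ = L₂ :=
  IsHausdorff.eq_iff_smodEq.mpr fun K => (h₁ K).symm.trans (h₂ K)

theorem hasAdicSum_sub_succ (b : ℕ → N) (hb : ∀ k, b k ∈ (I ^ k • ⊤ : Submodule R N)) :
    HasAdicSum I (fun k => b k - b (k + 1)) (b 0) := fun K => by
  rw [Finset.sum_range_sub', SModEq.sub_mem, sub_sub_cancel_left, neg_mem_iff]
  exact hb K

theorem exists_hasAdicSum [IsPrecomplete I N] (hg : ∀ k, g k ∈ (I ^ k • ⊤ : Submodule R N)) :
    ∃ L, HasAdicSum I g L :=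
  IsPrecomplete.prec ‹_› fun {m n} hmn => by
    rw [SModEq.sub_mem, ← Finset.sum_range_add_sum_Ico _ hmn, sub_add_cancel_left, neg_mem_iff]
    exact Submodule.sum_mem _ fun k hk =>
      Submodule.pow_smul_top_le I N (Finset.mem_Ico.mp hk).1 (hg k)

theorem exists_linearMap_hasAdicSum [IsAdicComplete I N] (f : ℕ → M →ₗ[R] N)
    (hf : ∀ k x, f k x ∈ (I ^ k • ⊤ : Submodule R N)) :
    ∃ F : M →ₗ[R] N, ∀ x, HasAdicSum I (fun k => f k x) (F x) := by
  choose F hF using fun x => exists_hasAdicSum (I := I) (g := fun k => f k x) (hf · x)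
  refine ⟨{ toFun := F, map_add' := fun x y => ?_, map_smul' := fun r x => ?_ }, hF⟩
  · exact (hF (x + y)).unique (by simpa only [map_add] using (hF x).add (hF y))
  · exact (hF (r • x)).unique (by simpa only [map_smul, RingHom.id_apply] using (hF x).smul r)

end AdicSum

section TruncationDatum

variable {R C₀ C₁ : Type*} [CommRing R] [AddCommGroup C₀] [Module R C₀] [AddCommGroup C₁]
  [Module R C₁]

theorem range_pow_le_range_pow {C : Type*} [AddCommGroup C] [Module R C] (u : Module.End R C)
    {m n : ℕ} (hmn : m ≤ n) : LinearMap.range (u ^ n) ≤ LinearMap.range (u ^ m) :=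
  (LinearMap.iterateRange u).monotone hmn

theorem le_and_add_one_le_sub_one_mul_sub {p d N : ℕ} (h : p * d + 1 ≤ (p - 1) * N) :
    d ≤ N ∧ d + 1 ≤ (p - 1) * (N - d) := by
  obtain _ | p := p
  · simp at h
  rw [Nat.add_sub_cancel] at h ⊢
  have hdN : d ≤ N := by
    by_contra! hNd
    nlinarith
  obtain ⟨k, rfl⟩ : ∃ k, N = d + k := ⟨N - d, by omega⟩
  exact ⟨hdN, by rw [Nat.add_sub_cancel_left]; nlinarith⟩

/-- In the application `T = Φ_N ∘ -`, `Φ = - ∘ Φ_M`, `W` inverts `Φ` up to `u₀ ^ d`, and `uᵢ` is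
multiplication by `u`; every field survives `- ⊗_R Q` except the last two, which are assumed. -/
structure IsTruncationDatum (p d : ℕ) (T Φ : C₀ →ₗ[R] C₁) (W : C₁ →ₗ[R] C₀)
    (u₀ : Module.End R C₀) (u₁ : Module.End R C₁) : Prop where
  comp_u₀ : T ∘ₗ u₀ = (u₁ ^ p) ∘ₗ T
  W_comp_Φ : W ∘ₗ Φ = u₀ ^ d
  W_comp_u₁ : W ∘ₗ u₁ = u₀ ∘ₗ W
  injective_u₀ : Function.Injective u₀
  iInf_range_u₀_pow : ⨅ n, LinearMap.range (u₀ ^ n) = ⊥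

namespace IsTruncationDatum

variable {p d : ℕ} {T Φ : C₀ →ₗ[R] C₁} {W : C₁ →ₗ[R] C₀} {u₀ : Module.End R C₀}
  {u₁ : Module.End R C₁}

theorem apply_mem_range_pow (h : IsTruncationDatum p d T Φ W u₀ u₁) {n : ℕ} {z : C₀}
    (hz : z ∈ LinearMap.range (u₀ ^ n)) : T z ∈ LinearMap.range (u₁ ^ (p * n)) := by
  obtain ⟨w, rfl⟩ := hz
  refine ⟨T w, ?_⟩
  rw [pow_mul, ← LinearMap.comp_apply, Module.End.commute_pow_left_of_commute h.comp_u₀.symm]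
  rfl

theorem mem_range_pow_sub (h : IsTruncationDatum p d T Φ W u₀ u₁) {n : ℕ} (hdn : d ≤ n)
    {z : C₀} (hz : Φ z ∈ LinearMap.range (u₁ ^ n)) : z ∈ LinearMap.range (u₀ ^ (n - d)) := by
  obtain ⟨y, hy⟩ := hz
  refine ⟨W y, (h.injective_u₀.iterate d) ?_⟩
  have hWu := Module.End.commute_pow_left_of_commute h.W_comp_u₁.symm n
  rw [← Module.End.coe_pow, ← Module.End.mul_apply, ← pow_add, Nat.add_sub_cancel' hdn,
    ← LinearMap.comp_apply, hWu, LinearMap.comp_apply, hy, ← LinearMap.comp_apply,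
    h.W_comp_Φ]

theorem eq_zero_of_mem_range_pow (h : IsTruncationDatum p d T Φ W u₀ u₁) {M₀ : ℕ}
    (hM₀ : d + 1 ≤ (p - 1) * M₀) {z : C₀} (hz : (T - Φ) z = 0)
    (hzM : z ∈ LinearMap.range (u₀ ^ M₀)) : z = 0 := by
  rw [LinearMap.sub_apply, sub_eq_zero] at hz
  have hstep : ∀ n, M₀ ≤ n → z ∈ LinearMap.range (u₀ ^ n) →
      z ∈ LinearMap.range (u₀ ^ (n + 1)) := fun n hn hzn => by
    have hpn : d + 1 ≤ (p - 1) * n := hM₀.trans (Nat.mul_le_mul_left _ hn)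
    rw [Nat.sub_one_mul] at hpn
    refine range_pow_le_range_pow u₀ (by omega) (h.mem_range_pow_sub (n := p * n) (by omega) ?_)
    rw [← hz]
    exact h.apply_mem_range_pow hzn
  have hall : ∀ j, z ∈ LinearMap.range (u₀ ^ (M₀ + j)) := fun j => by
    induction j with
    | zero => exact hzM
    | succ j ih => exact hstep (M₀ + j) (Nat.le_add_right M₀ j) ih
  rw [← Submodule.mem_bot R, ← h.iInf_range_u₀_pow, Submodule.mem_iInf]
  exact fun n => range_pow_le_range_pow u₀ (Nat.le_add_left n M₀) (hall n)

theorem exists_linearMap (h : IsTruncationDatum p d T Φ W u₀ u₁) {N₀ : ℕ}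
    (hN₀ : p * d + 1 ≤ (p - 1) * N₀)
    (hsol : ∀ β, ∃ γ, (T - Φ) ((u₀ ^ (N₀ - d)) γ) = (u₁ ^ N₀) β) :
    ∃ H : C₁ →ₗ[R] C₀, (T - Φ) ∘ₗ (u₀ ^ (N₀ - d)) ∘ₗ H = u₁ ^ N₀ := by
  set f := (T - Φ) ∘ₗ (u₀ ^ (N₀ - d))
  have hinj : Function.Injective f := by
    refine (injective_iff_map_eq_zero _).mpr fun γ hγ => h.injective_u₀.iterate (N₀ - d) ?_
    rw [← Module.End.coe_pow, map_zero]
    exact h.eq_zero_of_mem_range_pow (le_and_add_one_le_sub_one_mul_sub hN₀).2 hγ ⟨γ, rfl⟩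
  refine ⟨(LinearEquiv.ofInjective f hinj).symm.toLinearMap ∘ₗ
    (u₁ ^ N₀).codRestrict (LinearMap.range f) fun β => LinearMap.mem_range.mpr (hsol β), ?_⟩
  ext β
  change f ((LinearEquiv.ofInjective f hinj).symm ⟨(u₁ ^ N₀) β, _⟩) = _
  rw [← LinearEquiv.ofInjective_apply (h := hinj), LinearEquiv.apply_symm_apply]

theorem bijOn (h : IsTruncationDatum p d T Φ W u₀ u₁) {N₀ : ℕ}
    (hN₀ : p * d + 1 ≤ (p - 1) * N₀) {H : C₁ →ₗ[R] C₀}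
    (hH : (T - Φ) ∘ₗ (u₀ ^ (N₀ - d)) ∘ₗ H = u₁ ^ N₀) :
    Set.BijOn (T - Φ) {x | Φ x ∈ LinearMap.range (u₁ ^ N₀)}
      (LinearMap.range (u₁ ^ N₀) : Set C₁) := by
  obtain ⟨hdN, hM⟩ := le_and_add_one_le_sub_one_mul_sub hN₀
  have hTmem : ∀ x ∈ LinearMap.range (u₀ ^ (N₀ - d)), T x ∈ LinearMap.range (u₁ ^ N₀) :=
    fun x hx => range_pow_le_range_pow u₁ (by rw [Nat.sub_one_mul] at hM; omega)
      (h.apply_mem_range_pow hx)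
  refine ⟨fun x hx => ?_, fun x₁ hx₁ x₂ hx₂ heq => ?_, fun y ⟨w, hw⟩ => ?_⟩
  · exact sub_mem (hTmem x (h.mem_range_pow_sub hdN hx)) hx
  · rw [← sub_eq_zero]
    refine h.eq_zero_of_mem_range_pow hM (by rw [map_sub, heq, sub_self])
      (h.mem_range_pow_sub hdN ?_)
    rw [map_sub]
    exact sub_mem hx₁ hx₂
  · have hx : (T - Φ) ((u₀ ^ (N₀ - d)) (H w)) = y := by rw [← hw, ← hH]; rfl
    refine ⟨(u₀ ^ (N₀ - d)) (H w), ?_, hx⟩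
    change Φ ((u₀ ^ (N₀ - d)) (H w)) ∈ LinearMap.range (u₁ ^ N₀)
    rw [← sub_sub_cancel (T _) (Φ _), ← LinearMap.sub_apply, hx, ← hw]
    exact sub_mem (hTmem _ ⟨_, rfl⟩) ⟨w, rfl⟩

theorem rTensor (h : IsTruncationDatum p d T Φ W u₀ u₁) (Q : Type*) [AddCommGroup Q]
    [Module R Q] (hinj : Function.Injective (LinearMap.rTensor Q u₀))
    (hsep : ⨅ n, LinearMap.range (LinearMap.rTensor Q u₀ ^ n) = ⊥) :
    IsTruncationDatum p d (T.rTensor Q) (Φ.rTensor Q) (W.rTensor Q) (u₀.rTensor Q)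
      (u₁.rTensor Q) where
  comp_u₀ := by rw [← LinearMap.rTensor_comp, h.comp_u₀, LinearMap.rTensor_comp,
    LinearMap.rTensor_pow]
  W_comp_Φ := by rw [← LinearMap.rTensor_comp, h.W_comp_Φ, LinearMap.rTensor_pow]
  W_comp_u₁ := by rw [← LinearMap.rTensor_comp, h.W_comp_u₁, LinearMap.rTensor_comp]
  injective_u₀ := hinj
  iInf_range_u₀_pow := hsep

end IsTruncationDatum
end TruncationDatum

section FrobeniusHom

variable {S : Type*} [CommRing S] {φ : S →+* S} {ϖ : S} {p : ℕ}
  {M N N' : Type*} [AddCommGroup M] [Module S M] [AddCommGroup N] [Module S N]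
  [AddCommGroup N'] [Module S N']

theorem pow_smul_mem_span_singleton_pow_smul_top (K : ℕ) (y : N) :
    ϖ ^ K • y ∈ (Ideal.span {ϖ} ^ K • ⊤ : Submodule S N) :=
  Submodule.smul_mem_smul (Ideal.pow_mem_pow (Ideal.mem_span_singleton_self ϖ) K)
    Submodule.mem_top

theorem LinearMap.apply_mem_span_singleton_pow_smul_top (hφ : φ ϖ = ϖ ^ p) (hp : p ≠ 0)
    (f : N →ₛₗ[φ] N') {K : ℕ} {y : N} (hy : y ∈ (Ideal.span {ϖ} ^ K • ⊤ : Submodule S N)) :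
    f y ∈ (Ideal.span {ϖ} ^ K • ⊤ : Submodule S N') := by
  refine Submodule.smul_induction_on hy (fun r hr z _ => ?_)
    (fun y₁ y₂ h₁ h₂ => by rw [map_add]; exact add_mem h₁ h₂)
  rw [LinearMap.map_smulₛₗ]
  refine Submodule.smul_mem_smul ?_ Submodule.mem_top
  rw [Ideal.span_singleton_pow, Ideal.mem_span_singleton] at hr ⊢
  obtain ⟨t, rfl⟩ := hr
  rw [map_mul, map_pow, hφ, ← pow_mul]
  exact (pow_dvd_pow ϖ (Nat.le_mul_of_pos_left K (Nat.pos_of_ne_zero hp))).mul_right _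

theorem pow_apply_eq_pow_smul {R G C : Type*} [Semiring R] [Monoid G] [AddCommMonoid C]
    [Module R C] [MulAction G C] {u : Module.End R C} {s : G} (hu : ∀ x, u x = s • x) (n : ℕ)
    (x : C) : (u ^ n) x = s ^ n • x := by
  induction n generalizing x with
  | zero => rw [pow_zero, pow_zero, one_smul, Module.End.one_apply]
  | succ n ih => rw [pow_succ, Module.End.mul_apply, hu, ih, smul_smul, ← pow_succ]

theorem exists_iterate_eq_pow_smul (hφ : φ ϖ = ϖ ^ p) (hp : p ≠ 0) (ΦN : N →ₛₗ[φ] N)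
    (W : (M →ₛₗ[φ] N) →ₗ[S] (M →ₗ[S] N)) {e : ℕ} (he : e ≠ 0) (γ : M →ₗ[S] N) (k : ℕ) :
    ∃ c, (fun α => ϖ ^ e • W (ΦN.comp α))^[k] γ = ϖ ^ k • c := by
  induction k with
  | zero => exact ⟨γ, by rw [Function.iterate_zero_apply, pow_zero, one_smul]⟩
  | succ k ih =>
    obtain ⟨c, hc⟩ := ih
    have hcomp : ΦN.comp (ϖ ^ k • c) = ϖ ^ (p * k) • ΦN.comp c := by
      ext x
      simp [LinearMap.map_smulₛₗ, hφ, pow_mul]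
    have hexp : e + p * k = k + 1 + (e + p * k - (k + 1)) := by
      have := Nat.le_mul_of_pos_left k (Nat.pos_of_ne_zero hp)
      omega
    refine ⟨ϖ ^ (e + p * k - (k + 1)) • W (ΦN.comp c), ?_⟩
    rw [Function.iterate_succ_apply', hc, hcomp, map_smul, smul_smul, ← pow_add, smul_smul,
      ← pow_add, ← hexp]

theorem exists_linearMap_frobenius_sub_eq [IsAdicComplete (Ideal.span {ϖ}) N]
    (hφ : φ ϖ = ϖ ^ p) (Φ : M →ₛₗ[φ] M) (ΦN : N →ₛₗ[φ] N) {d : ℕ}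
    (W : (M →ₛₗ[φ] N) →ₗ[S] (M →ₗ[S] N)) (hW : ∀ β, (W β).comp Φ = ϖ ^ d • β) {m n : ℕ}
    (hmn : m + d = n) (hnm : n < p * m) (β : M →ₛₗ[φ] N) :
    ∃ γ : M →ₗ[S] N, ∀ x, ΦN (ϖ ^ m • γ x) - ϖ ^ m • γ (Φ x) = ϖ ^ n • β x := by
  have hp : p ≠ 0 := by rintro rfl; simp at hnm
  -- `γ = -∑ Ψᵏ (W β)`: the terms `tₖ = ϖ ^ m • Ψᵏ (W β)` satisfy `t₀ ∘ Φ = ϖ ^ n • β` and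
  -- `tₖ₊₁ ∘ Φ = ΦN ∘ tₖ`, so `ΦN ∘ (ϖ ^ m • γ) - (ϖ ^ m • γ) ∘ Φ` telescopes to `ϖ ^ n • β`.
  set Ψ : (M →ₗ[S] N) → (M →ₗ[S] N) := fun α => ϖ ^ (p * m - n) • W (ΦN.comp α)
  set b : ℕ → (M →ₗ[S] N) := fun k => Ψ^[k] (W β)
  have hb_succ : ∀ k, b (k + 1) = Ψ (b k) := fun k => Function.iterate_succ_apply' Ψ k (W β)
  have hbx : ∀ k x, b k x ∈ (Ideal.span {ϖ} ^ k • ⊤ : Submodule S N) := fun k x => by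
    obtain ⟨c, hc⟩ : ∃ c, b k = ϖ ^ k • c :=
      exists_iterate_eq_pow_smul hφ hp ΦN W (e := p * m - n) (by omega) (W β) k
    rw [hc, LinearMap.smul_apply]
    exact pow_smul_mem_span_singleton_pow_smul_top _ _
  obtain ⟨F, hF⟩ := exists_linearMap_hasAdicSum b hbx
  refine ⟨-F, fun x => ?_⟩
  have hWx : ∀ β' x, W β' (Φ x) = ϖ ^ d • β' x := fun β' => LinearMap.ext_iff.mp (hW β')
  set B : ℕ → N := fun k => ϖ ^ m • b k (Φ x)
  have hB_zero : B 0 = ϖ ^ n • β x := by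
    simp only [B, b, Function.iterate_zero_apply, hWx, smul_smul, ← pow_add, hmn]
  have hB_succ : ∀ k, ΦN (ϖ ^ m • b k x) = B (k + 1) := fun k => by
    simp only [B, hb_succ, Ψ, LinearMap.smul_apply, hWx, LinearMap.comp_apply,
      LinearMap.map_smulₛₗ, map_pow, hφ, smul_smul, ← pow_add, ← pow_mul]
    congr 2
    omega
  have hsum := hasAdicSum_sub_succ B fun k => Submodule.smul_mem _ _ (hbx k _)
  have hsum' := ((hF (Φ x)).smul (ϖ ^ m)).sub (((hF x).smul (ϖ ^ m)).map ΦN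
    fun K y hy => ΦN.apply_mem_span_singleton_pow_smul_top hφ hp hy)
  simp only [hB_succ] at hsum'
  rw [LinearMap.neg_apply, LinearMap.neg_apply, smul_neg, smul_neg, map_neg, neg_sub_neg,
    ← hB_zero]
  exact hsum'.unique hsum

variable {R : Type*} [CommRing R] [Module R (M →ₗ[S] N)] [Module R (M →ₛₗ[φ] N)]
  [LinearMap.CompatibleSMul (M →ₛₗ[φ] N) (M →ₗ[S] N) R S]
  {Φ : M →ₛₗ[φ] M} {ΦN : N →ₛₗ[φ] N} {T Φ' : (M →ₗ[S] N) →ₗ[R] (M →ₛₗ[φ] N)}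
  {u₀ : Module.End R (M →ₗ[S] N)} {u₁ : Module.End R (M →ₛₗ[φ] N)}
  {d : ℕ} {W : (M →ₛₗ[φ] N) →ₗ[S] (M →ₗ[S] N)}

theorem isTruncationDatum_hom [IsHausdorff (Ideal.span {ϖ}) N] (hφ : φ ϖ = ϖ ^ p)
    (hN : IsSMulRegular N ϖ) (hT : ∀ α x, T α x = ΦN (α x)) (hΦ' : ∀ α x, Φ' α x = α (Φ x))
    (hu₀ : ∀ α, u₀ α = ϖ • α) (hu₁ : ∀ β, u₁ β = ϖ • β)
    (hW : ∀ α, W (α.comp Φ) = ϖ ^ d • α) :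
    IsTruncationDatum p d T Φ' (W.restrictScalars R) u₀ u₁ where
  comp_u₀ := LinearMap.ext fun α => LinearMap.ext fun x => by
    rw [LinearMap.comp_apply, LinearMap.comp_apply, pow_apply_eq_pow_smul hu₁, hT, hu₀,
      LinearMap.smul_apply, LinearMap.smul_apply, hT, LinearMap.map_smulₛₗ, hφ]
  W_comp_Φ := LinearMap.ext fun α => by
    rw [LinearMap.comp_apply, pow_apply_eq_pow_smul hu₀, LinearMap.restrictScalars_apply, ← hW]
    congr 1
    exact LinearMap.ext (hΦ' α)
  W_comp_u₁ := LinearMap.ext fun β => by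
    rw [LinearMap.comp_apply, LinearMap.comp_apply, hu₀, hu₁, LinearMap.restrictScalars_apply,
      map_smul, LinearMap.restrictScalars_apply]
  injective_u₀ := (injective_iff_map_eq_zero _).mpr fun α hα => LinearMap.ext fun x =>
    hN.right_eq_zero_of_smul (by rw [← LinearMap.smul_apply, ← hu₀, hα, LinearMap.zero_apply])
  iInf_range_u₀_pow := eq_bot_iff.mpr fun α hα => LinearMap.ext fun x =>
    (IsHausdorff.haus ‹_› _ fun n => by
      obtain ⟨c, rfl⟩ := Submodule.mem_iInf _ |>.mp hα n
      rw [pow_apply_eq_pow_smul hu₀, LinearMap.smul_apply, SModEq.zero]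
      exact pow_smul_mem_span_singleton_pow_smul_top _ _).trans (LinearMap.zero_apply x).symm

theorem exists_linearMap_sub_comp_pow_eq [IsAdicComplete (Ideal.span {ϖ}) N]
    (hφ : φ ϖ = ϖ ^ p) (hN : IsSMulRegular N ϖ) (hT : ∀ α x, T α x = ΦN (α x))
    (hΦ' : ∀ α x, Φ' α x = α (Φ x)) (hu₀ : ∀ α, u₀ α = ϖ • α) (hu₁ : ∀ β, u₁ β = ϖ • β)
    (hW : ∀ α, W (α.comp Φ) = ϖ ^ d • α) (hW' : ∀ β, (W β).comp Φ = ϖ ^ d • β) {N₀ : ℕ}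
    (hN₀ : p * d + 1 ≤ (p - 1) * N₀) :
    ∃ H, (T - Φ') ∘ₗ (u₀ ^ (N₀ - d)) ∘ₗ H = u₁ ^ N₀ := by
  obtain ⟨hdN, hM⟩ := le_and_add_one_le_sub_one_mul_sub hN₀
  refine (isTruncationDatum_hom hφ hN hT hΦ' hu₀ hu₁ hW).exists_linearMap hN₀
    fun β => ?_
  obtain ⟨γ, hγ⟩ := exists_linearMap_frobenius_sub_eq hφ Φ ΦN W hW' (Nat.sub_add_cancel hdN)
    (by rw [Nat.sub_one_mul] at hM; omega) β
  refine ⟨γ, LinearMap.ext fun x => ?_⟩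
  rw [LinearMap.sub_apply, LinearMap.sub_apply, hT, hΦ', pow_apply_eq_pow_smul hu₀,
    pow_apply_eq_pow_smul hu₁, LinearMap.smul_apply, LinearMap.smul_apply,
    LinearMap.smul_apply, hγ]

end FrobeniusHom

section Linearization

variable {S : Type} [CommRing S] {φ : S →+* S} {M P N : Type} [AddCommGroup M] [Module S M]
  [AddCommGroup P] [Module S P] [AddCommGroup N] [Module S N]

def IsFrobeniusBaseChange.linearEquiv {ι : M →ₛₗ[φ] P} (hι : IsFrobeniusBaseChange φ ι)
    (N : Type) [AddCommGroup N] [Module S N] : (P →ₗ[S] N) ≃ₗ[S] (M →ₛₗ[φ] N) :=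
  LinearEquiv.ofBijective (LinearMap.lcompₛₗ S N (RingHom.id S) ι) <|
    (Function.bijective_iff_existsUnique _).mpr fun g => by
      obtain ⟨f, hf, huniq⟩ := hι N inferInstance inferInstance g
      exact ⟨f, LinearMap.ext hf, fun f' hf' => huniq f' (LinearMap.ext_iff.mp hf')⟩

theorem exists_pow_smul_eq_zero_of_map_eq_zero {E : S} {f : P →ₗ[S] M}
    (hf : Function.Injective (LocalizedModule.map (Submonoid.powers E) f)) {z : P}
    (hz : f z = 0) : ∃ n : ℕ, E ^ n • z = 0 := by
  have : LocalizedModule.mkLinearMap (Submonoid.powers E) P z = 0 := hf <| by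
    rw [LocalizedModule.mkLinearMap_apply, LocalizedModule.map_mk, hz, LocalizedModule.zero_mk,
      map_zero]
  obtain ⟨⟨_, n, rfl⟩, hn⟩ := (IsLocalizedModule.eq_zero_iff (Submonoid.powers E) _).mp this
  exact ⟨n, hn⟩

theorem LinearizationBijectiveAfterInverting.exists_linearMap [Module.Projective S M] {E : S}
    {Φ : M →ₛₗ[φ] M} (hΦ : LinearizationBijectiveAfterInverting φ E Φ) {h : ℕ}
    (hht : ∀ x : M, E ^ h • x ∈ Submodule.span S (Set.range Φ)) (hN : IsSMulRegular N E) :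
    ∃ V : (M →ₛₗ[φ] N) →ₗ[S] (M →ₗ[S] N),
      (∀ α : M →ₗ[S] N, V (α.comp Φ) = E ^ h • α) ∧ ∀ β, (V β).comp Φ = E ^ h • β := by
  obtain ⟨P, _, _, ι, Φlin, hι, hΦlin, hbij⟩ := hΦ
  have hrange : ∀ x, E ^ h • x ∈ LinearMap.range Φlin := fun x =>
    Submodule.span_le.mpr
      (Set.range_subset_iff.mpr fun m => LinearMap.mem_range.mpr ⟨ι m, hΦlin m⟩) (hht x)
  obtain ⟨ψ, hψ⟩ := Module.projective_lifting_property Φlin.rangeRestrict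
    ((E ^ h • LinearMap.id).codRestrict _ hrange) Φlin.surjective_rangeRestrict
  have hψx : ∀ x, Φlin (ψ x) = E ^ h • x := fun x =>
    congr_arg Subtype.val (LinearMap.congr_fun hψ x)
  set e := hι.linearEquiv N
  refine ⟨LinearMap.lcomp S N ψ ∘ₗ e.symm.toLinearMap, fun α => ?_, fun β => ?_⟩
  · have he : e.symm (α.comp Φ) = α ∘ₗ Φlin :=
      e.symm_apply_eq.mpr (LinearMap.ext fun m => (congr_arg α (hΦlin m)).symm)
    ext x
    simp [he, hψx]
  · ext m
    obtain ⟨n, hn⟩ := exists_pow_smul_eq_zero_of_map_eq_zero hbij.1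
      (z := ψ (Φ m) - E ^ h • ι m) (by rw [map_sub, hψx, map_smul, hΦlin, sub_self])
    have hker := (hN.pow n).right_eq_zero_of_smul
      (show E ^ n • e.symm β (ψ (Φ m) - E ^ h • ι m) = 0 by rw [← map_smul, hn, map_zero])
    rw [map_sub, sub_eq_zero, map_smul] at hker
    have hβ : e.symm β (ι m) = β m := LinearMap.congr_fun (e.apply_symm_apply β) m
    change e.symm β (ψ (Φ m)) = E ^ h • β m
    rw [hker, hβ]

end Linearization

theorem add_dvd_pow_mul_of_pow_eq_zero {R : Type*} [CommRing R] (x ν : R) (e : ℕ) {a : ℕ}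
    (hν : ν ^ a = 0) : x ^ e + ν ∣ x ^ (e * a) := by
  have := sub_dvd_pow_sub_pow (x ^ e) (-ν) a
  rwa [sub_neg_eq_add, neg_pow, hν, mul_zero, sub_zero, ← pow_mul] at this

section BreuilKisin

variable {p k' A}

set_option linter.unusedSectionVars false

theorem IsFrobeniusLift.map_X {σ : WW p k' A →+* WW p k' A} {φS : SS p k' A →+* SS p k' A}
    (hφ : IsFrobeniusLift p k' A σ φS) : φS X = X ^ p := by
  have hp : p ≠ 0 := (Fact.out : p.Prime).ne_zero
  ext n
  rw [hφ.2.2, coeff_X_pow, coeff_X]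
  by_cases hn : n = p
  · simp [hn, Nat.div_self (Nat.pos_of_ne_zero hp)]
  · split_ifs with hdvd hnp <;> simp_all [Nat.div_eq_iff_eq_mul_left (Nat.pos_of_ne_zero hp)]

theorem IsEisenstein.exists_X_pow_eq_mul {e : ℕ} {E : Polynomial (WittVector p k')}
    (hE : IsEisenstein p k' e E) {a : ℕ} (ha : (p : A) ^ a = 0) :
    ∃ c, (X : SS p k' A) ^ (e * a) = polyToSS p k' A E * c := by
  obtain ⟨hmon, hdeg, -, hcoef, -⟩ := hE
  let ρ : Polynomial (WittVector p k') →+* SS p k' A := Polynomial.coeToPowerSeries.ringHom.comp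
    (Polynomial.mapRingHom Algebra.TensorProduct.includeLeftRingHom)
  have hρE : ρ E = polyToSS p k' A E := by
    ext n
    simp [ρ, polyToSS, Polynomial.coeff_coe]
  have hmem :
      E - Polynomial.X ^ e ∈ Ideal.map Polynomial.C (Ideal.span {(p : WittVector p k')}) := by
    refine Ideal.mem_map_C_iff.mpr fun n => ?_
    rw [Polynomial.coeff_sub, Polynomial.coeff_X_pow]
    rcases lt_trichotomy n e with hlt | rfl | hgt
    · simpa [hlt.ne] using hcoef n hlt
    · simp [← hdeg, hmon.coeff_natDegree]
    · simp [hgt.ne', Polynomial.coeff_eq_zero_of_natDegree_lt (hdeg ▸ hgt)]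
  have hmem' := Ideal.mem_map_of_mem ρ hmem
  rw [Ideal.map_map, Ideal.map_span, Set.image_singleton, RingHom.comp_apply, map_natCast,
    map_natCast, map_sub, map_pow, hρE] at hmem'
  obtain ⟨q, hq⟩ := Ideal.mem_span_singleton'.mp hmem'
  have hpa : ((p : SS p k' A)) ^ a = 0 := by
    rw [← map_natCast (AtoSS p k' A), ← map_pow, ha, map_zero]
  have hdvd := add_dvd_pow_mul_of_pow_eq_zero (X : SS p k' A) (q * p) e
    (by rw [mul_pow, hpa, mul_zero])
  have hρX : ρ Polynomial.X = X := by simp [ρ]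
  rwa [hq, hρX, add_sub_cancel] at hdvd

theorem exists_linearMap_comp_eq_X_pow_smul {e a h : ℕ} {E : Polynomial (WittVector p k')}
    (hE : IsEisenstein p k' e E) (ha : (p : A) ^ a = 0) {φS : SS p k' A →+* SS p k' A}
    {M N : Type} [AddCommGroup M] [Module (SS p k' A) M] [Module.Projective (SS p k' A) M]
    [AddCommGroup N] [Module (SS p k' A) N] {Φ : M →ₛₗ[φS] M}
    (hMiso : LinearizationBijectiveAfterInverting φS (polyToSS p k' A E) Φ)
    (hMht : ∀ x : M, polyToSS p k' A E ^ h • x ∈ Submodule.span (SS p k' A) (Set.range Φ))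
    (hX : IsSMulRegular N (X : SS p k' A)) :
    ∃ W : (M →ₛₗ[φS] N) →ₗ[SS p k' A] (M →ₗ[SS p k' A] N),
      (∀ α : M →ₗ[SS p k' A] N, W (α.comp Φ) = (X : SS p k' A) ^ (e * a * h) • α) ∧
        ∀ β, (W β).comp Φ = (X : SS p k' A) ^ (e * a * h) • β := by
  obtain ⟨c, hc⟩ := hE.exists_X_pow_eq_mul ha
  obtain ⟨V, hV, hV'⟩ := hMiso.exists_linearMap hMht (IsSMulRegular.mul_iff.mp (hc ▸ hX.pow _)).1
  have hXc : (X : SS p k' A) ^ (e * a * h) = c ^ h * polyToSS p k' A E ^ h := by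
    rw [pow_mul, hc, mul_pow, mul_comm]
  refine ⟨c ^ h • V, fun α => ?_, fun β => ?_⟩
  · rw [LinearMap.smul_apply, hV, smul_smul, hXc]
  · rw [LinearMap.smul_apply, LinearMap.smul_comp, hV', smul_smul, hXc]

end BreuilKisin

/-- `C¹ = Hom(φ*M, N)` is modelled as the `φ`-semilinear maps `M → N`, and `u^k (Cⁱ ⊗_A Q)` as
the range of the `k`-th power of `rTensor Q uᵢ`. -/
theorem statement_6
    (σ : WW p k' A →+* WW p k' A) (φS : SS p k' A →+* SS p k' A)
    (hφ : IsFrobeniusLift p k' A σ φS)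
    (a : ℕ) (ha : (p : A) ^ a = 0)
    (e : ℕ) (E : Polynomial (WittVector p k')) (hE : IsEisenstein p k' e E)
    (h : ℕ)
    (M : Type) [AddCommGroup M] [Module (SS p k' A) M]
    [Module.Projective (SS p k' A) M]
    (Φ : M →ₛₗ[φS] M)
    (hMiso : LinearizationBijectiveAfterInverting φS (polyToSS p k' A E) Φ)
    (hMht : ∀ x : M, polyToSS p k' A E ^ h • x ∈ Submodule.span (SS p k' A) (Set.range ⇑Φ))
    (N : Type) [AddCommGroup N] [Module (SS p k' A) N]
    (hNcomp : IsAdicComplete (Ideal.span {(PowerSeries.X : SS p k' A)}) N)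
    (hNtf : ∀ x : N, (PowerSeries.X : SS p k' A) • x = 0 → x = 0)
    (ΦN : N →ₛₗ[φS] N)
    (Q : Type) [AddCommGroup Q] [Module A Q] :
    letI : Module A (M →ₗ[SS p k' A] N) :=
      Module.compHom (M →ₗ[SS p k' A] N) (AtoSS p k' A)
    letI : Module A (M →ₛₗ[φS] N) :=
      Module.compHom (M →ₛₗ[φS] N) (AtoSS p k' A)
    ∀ (δ : (M →ₗ[SS p k' A] N) →ₗ[A] (M →ₛₗ[φS] N)),
      (∀ (α : M →ₗ[SS p k' A] N) (m : M), δ α m = ΦN (α m) - α (Φ m)) →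
      ∀ (Φstar : (M →ₗ[SS p k' A] N) →ₗ[A] (M →ₛₗ[φS] N)),
        (∀ (α : M →ₗ[SS p k' A] N) (m : M), Φstar α m = α (Φ m)) →
        ∀ (u0 : (M →ₗ[SS p k' A] N) →ₗ[A] (M →ₗ[SS p k' A] N)),
          (∀ α, u0 α = (PowerSeries.X : SS p k' A) • α) →
          ∀ (u1 : (M →ₛₗ[φS] N) →ₗ[A] (M →ₛₗ[φS] N)),
            (∀ β, u1 β = (PowerSeries.X : SS p k' A) • β) →
            -- `C⁰ ⊗_A Q` and `C¹ ⊗_A Q` are `u`-torsion free: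
            (∀ z : TensorProduct A (M →ₗ[SS p k' A] N) Q,
              LinearMap.rTensor Q u0 z = 0 → z = 0) →
            (∀ z : TensorProduct A (M →ₛₗ[φS] N) Q,
              LinearMap.rTensor Q u1 z = 0 → z = 0) →
            -- `C⁰ ⊗_A Q` is `u`-adically separated:
            ((⨅ n : ℕ, LinearMap.range
              ((LinearMap.rTensor Q u0 :
                Module.End A (TensorProduct A (M →ₗ[SS p k' A] N) Q)) ^ n)) = ⊥) →
            ((∀ M₀ : ℕ, e * a * h + 1 ≤ (p - 1) * M₀ →
                ∀ z : TensorProduct A (M →ₗ[SS p k' A] N) Q,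
                  LinearMap.rTensor Q δ z = 0 →
                  z ∈ LinearMap.range
                    ((LinearMap.rTensor Q u0 :
                      Module.End A (TensorProduct A (M →ₗ[SS p k' A] N) Q)) ^ M₀) →
                  z = 0) ∧
              (∀ N₀ : ℕ, p * e * a * h + 1 ≤ (p - 1) * N₀ →
                Set.BijOn (⇑(LinearMap.rTensor Q δ))
                  {x : TensorProduct A (M →ₗ[SS p k' A] N) Q |
                    LinearMap.rTensor Q Φstar x ∈ LinearMap.range
                      ((LinearMap.rTensor Q u1 :
                        Module.End A (TensorProduct A (M →ₛₗ[φS] N) Q)) ^ N₀)}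
                  ↑(LinearMap.range
                    ((LinearMap.rTensor Q u1 :
                      Module.End A (TensorProduct A (M →ₛₗ[φS] N) Q)) ^ N₀)))) := by
  let : Module A (M →ₗ[SS p k' A] N) := Module.compHom _ (AtoSS p k' A)
  let : Module A (M →ₛₗ[φS] N) := Module.compHom _ (AtoSS p k' A)
  intro δ hδ Φstar hΦstar u0 hu0 u1 hu1 htf0 _ hsep
  have hX : IsSMulRegular N (X : SS p k' A) := .of_right_eq_zero_of_smul hNtf
  have hφX := hφ.map_X
  obtain ⟨W, hW, hW'⟩ := exists_linearMap_comp_eq_X_pow_smul hE ha hMiso hMht hX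
  have : LinearMap.CompatibleSMul (M →ₛₗ[φS] N) (M →ₗ[SS p k' A] N) A (SS p k' A) :=
    ⟨fun f r β => f.map_smul (AtoSS p k' A r) β⟩
  have hT : ∀ α x, (δ + Φstar) α x = ΦN (α x) := fun α x => by
    rw [LinearMap.add_apply, LinearMap.add_apply, hδ, hΦstar, sub_add_cancel]
  have hQ := (isTruncationDatum_hom hφX hX hT hΦstar hu0 hu1 hW).rTensor Q
    ((injective_iff_map_eq_zero _).mpr htf0) hsep
  rw [← add_sub_cancel_right δ Φstar, LinearMap.rTensor_sub]
  refine ⟨fun M₀ hM₀ z hz hzM => hQ.eq_zero_of_mem_range_pow hM₀ hz hzM, fun N₀ hN₀ => ?_⟩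
  rw [mul_assoc p, mul_assoc p] at hN₀
  obtain ⟨H, hH⟩ := exists_linearMap_sub_comp_pow_eq hφX hX hT hΦstar hu0 hu1 hW hW' hN₀
  refine hQ.bijOn hN₀ (H := H.rTensor Q) ?_
  rw [← LinearMap.rTensor_sub, LinearMap.rTensor_pow, ← LinearMap.rTensor_comp,
    ← LinearMap.rTensor_comp, hH, LinearMap.rTensor_pow]
end
end

section
/- Let a ≥ 1 and let A be a Noetherian Z_p-algebra with p^a = 0. Let E(u) ∈ W(k')[u] be an Eisenstein polynomial of degree e', and let M and N be Breuil–Kisin modules with A-coefficients, with N of height at most h. Write N[1/u] := N ⊗_{S_A} S_A[1/u], with its induced Φ-structure, and let f : M → N[1/u]/N be an S_A-linear map satisfying f ∘ Φ_M = Φ̄ ∘ φ*f, where Φ̄ : φ*(N[1/u]/N) → N[1/u]/N is the induced map. Then for every integer i ≥ ⌊e'·a·h/(p−1)⌋, the image f(M) is killed by u^i. -/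
open scoped TensorProduct
open PowerSeries

noncomputable section

variable (p : ℕ) [Fact p.Prime]
variable (k' : Type) [Field k'] [Fintype k'] [CharP k' p]

/-! Since `p ^ a = 0` and `E ≡ u ^ e'` modulo `p`, `E` divides `u ^ (e' * a)`. If `Φ_N n` is
divisible by `u ^ D` with `D > e' * a * h`, the height condition and the injectivity of the
linearization `φ^* N → N` (it is injective after inverting `E`, and `φ^* N` embeds in a free
module) show that `E ^ h • ι n` is divisible by `u ^ D` in `φ^* N`, hence `ι n` by `u`; since
`u ∣ φ s` forces `u ∣ s`, this gives `n ∈ u • N`.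

If `u ^ j` kills `f(M)` and `(p - 1) * j > e' * a * h`, write `f m = n / u ^ j`. Then
`f (Φ m) = Φ_N n / u ^ (p * j)` is killed by `u ^ j`, so `u ^ ((p - 1) * j)` divides `Φ_N n`,
so `n ∈ u • N` and `u ^ (j - 1)` kills `f m`. Starting from any power of `u` killing the finitely
generated module `f(M)` and descending gives the bound. -/

section BaseChange

variable {S : Type} [CommRing S] {φ : S →+* S} {N P : Type} [AddCommGroup N] [Module S N]
  [AddCommGroup P] [Module S P]

theorem IsFrobeniusBaseChange.exists_injective_pi {ι : N →ₛₗ[φ] P}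
    (hι : IsFrobeniusBaseChange φ ι) {r : ℕ} (ρ : N →ₗ[S] (Fin r → S))
    (π : (Fin r → S) →ₗ[S] N) (hπρ : π ∘ₗ ρ = LinearMap.id) :
    ∃ j : P →ₗ[S] (Fin r → S), Function.Injective j ∧ ∀ y i, j (ι y) i = φ (ρ y i) := by
  let g : N →ₛₗ[φ] (Fin r → S) :=
    { toFun y i := φ (ρ y i)
      map_add' _ _ := by ext; simp
      map_smul' _ _ := by ext; simp }
  obtain ⟨j, hj, -⟩ := hι _ _ _ g
  let k : (Fin r → S) →ₗ[S] P :=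
    Fintype.linearCombination S fun i => ι (π fun i' => if i = i' then 1 else 0)
  have hkg : ∀ y, k (g y) = ι y := fun y => by
    conv_rhs => rw [← LinearMap.id_apply (R := S) y, ← hπρ, LinearMap.comp_apply,
      LinearMap.pi_apply_eq_sum_univ π]
    simp [k, g, Fintype.linearCombination_apply, map_sum]
  have hkj : k ∘ₗ j = LinearMap.id :=
    (hι P _ _ ι).unique (fun y => by simp [hj, hkg]) (fun _ => rfl)
  exact ⟨j, Function.LeftInverse.injective (g := k) (LinearMap.congr_fun hkj),
    fun y => congrFun (hj y)⟩

theorem LinearMap.injective_of_injective_localizedModuleMap {T : Submonoid S}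
    (hT : ∀ t ∈ T, IsSMulRegular P t) (f : P →ₗ[S] N)
    (hf : Function.Injective (LocalizedModule.map T f)) : Function.Injective f := by
  refine (injective_iff_map_eq_zero f).mpr fun z hz => ?_
  have hz' : LocalizedModule.mkLinearMap T P z = 0 :=
    hf (by rw [LocalizedModule.mkLinearMap_apply, LocalizedModule.map_mk, hz,
      LocalizedModule.zero_mk, map_zero])
  obtain ⟨⟨t, ht⟩, htz⟩ := (IsLocalizedModule.eq_zero_iff T _).mp hz'
  exact hT t ht (by simpa using htz)

end BaseChange

theorem dvd_of_pow_mul_eq_pow_mul {R : Type*} [CommRing R] {u E x y : R} {e h D : ℕ}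
    (hu : IsRegular u) (hE : E ∣ u ^ e) (hD : e * h < D) (hxy : E ^ h * x = u ^ D * y) :
    u ∣ x := by
  obtain ⟨c, hc⟩ := hE
  have hx : x = u ^ (D - e * h) * (c ^ h * y) := (hu.pow (e * h)).left <| by
    calc u ^ (e * h) * x = c ^ h * (E ^ h * x) := by rw [pow_mul, hc]; ring
      _ = u ^ (e * h) * (u ^ (D - e * h) * (c ^ h * y)) := by
        rw [hxy, ← mul_assoc (u ^ (e * h)), ← pow_add, Nat.add_sub_cancel' hD.le]; ring
  rw [hx]
  exact dvd_mul_of_dvd_left (dvd_pow_self u (by omega)) _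

theorem Module.Finite.exists_pow_smul_eq_zero {S M Q : Type*} [CommRing S] [AddCommGroup M]
    [Module S M] [Module.Finite S M] [AddCommGroup Q] [Module S Q] {u : S} (f : M →ₗ[S] Q)
    (hQ : ∀ q : Q, ∃ k, u ^ k • q = 0) : ∃ s, ∀ m, u ^ s • f m = 0 := by
  classical
  obtain ⟨T, hT⟩ := Module.Finite.fg_top (R := S) (M := M)
  choose k hk using fun m => hQ (f m)
  refine ⟨∑ t ∈ T, k t, fun m => ?_⟩
  suffices m ∈ LinearMap.ker (u ^ (∑ t ∈ T, k t) • f) by simpa using this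
  refine Submodule.span_le.mpr (fun t ht => ?_) (hT ▸ Submodule.mem_top)
  obtain ⟨c, hc⟩ := pow_dvd_pow u (Finset.single_le_sum (f := k) (fun _ _ => Nat.zero_le _) ht)
  rw [SetLike.mem_coe, LinearMap.mem_ker, LinearMap.smul_apply, hc, mul_comm, mul_smul, hk,
    smul_zero]

/-- `N[1/u]/N`. -/
abbrev AwayQuotient {S : Type} [CommRing S] (u : S) (N : Type) [AddCommGroup N] [Module S N] :
    Type :=
  LocalizedModule (Submonoid.powers u) N ⧸
    LinearMap.range (LocalizedModule.mkLinearMap (Submonoid.powers u) N)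

namespace AwayQuotient

variable {S : Type} [CommRing S] (u : S) {N : Type} [AddCommGroup N] [Module S N]

/-- `n / u ^ k mod N`. -/
def mk (n : N) (k : ℕ) : AwayQuotient u N :=
  Submodule.Quotient.mk (LocalizedModule.mk n ⟨u ^ k, pow_mem (Submonoid.mem_powers u) k⟩)

variable {u}

theorem smul_mk (s : S) (n : N) (k : ℕ) : s • mk u n k = mk u (s • n) k := by
  rw [mk, mk, ← Submodule.Quotient.mk_smul, LocalizedModule.smul'_mk]

theorem mk_pow_smul (n : N) (k : ℕ) : mk u (u ^ k • n) k = 0 :=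
  (Submodule.Quotient.mk_eq_zero _).mpr ⟨n, (LocalizedModule.mk_cancel ⟨u ^ k, _⟩ n).symm⟩

theorem mk_eq_zero_iff (hu : IsSMulRegular N u) {n : N} {k : ℕ} :
    mk u n k = 0 ↔ ∃ y, n = u ^ k • y := by
  refine ⟨fun h => ?_, fun ⟨y, hy⟩ => hy ▸ mk_pow_smul y k⟩
  obtain ⟨y, hy⟩ := (Submodule.Quotient.mk_eq_zero _).mp h
  obtain ⟨⟨_, l, rfl⟩, ht⟩ := LocalizedModule.mk_eq.mp hy
  exact ⟨y, (hu.pow l (by simpa [Submonoid.smul_def] using ht)).symm⟩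

theorem exists_pow_smul_eq_zero (q : AwayQuotient u N) : ∃ k, u ^ k • q = 0 := by
  obtain ⟨z, rfl⟩ := Submodule.Quotient.mk_surjective _ q
  induction z using LocalizedModule.induction_on with
  | h y s =>
    obtain ⟨_, l, rfl⟩ := s
    exact ⟨l, (smul_mk _ y l).trans (mk_pow_smul y l)⟩

theorem exists_eq_mk_of_pow_smul_eq_zero (hu : IsSMulRegular N u) {q : AwayQuotient u N}
    {j : ℕ} (hq : u ^ j • q = 0) : ∃ n, q = mk u n j := by
  obtain ⟨z, rfl⟩ := Submodule.Quotient.mk_surjective _ q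
  induction z using LocalizedModule.induction_on with
  | h y s =>
    obtain ⟨_, l, rfl⟩ := s
    obtain ⟨n, hn⟩ := (mk_eq_zero_iff hu).mp ((smul_mk _ y l).symm.trans hq)
    exact ⟨n, congrArg _ (LocalizedModule.mk_eq.mpr ⟨1, by simpa [Submonoid.smul_def] using hn⟩)⟩

end AwayQuotient

theorem pow_smul_eq_zero_of_le {S Q : Type*} [Monoid S] [AddMonoid Q] [DistribMulAction S Q]
    {u : S} {x : Q} {s t : ℕ} (hst : s ≤ t) (hs : u ^ s • x = 0) : u ^ t • x = 0 := by
  rw [← Nat.sub_add_cancel hst, pow_add, mul_smul, hs, smul_zero]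

section FrobeniusModule

variable {S : Type} [CommRing S] {φ : S →+* S} {u E : S} {e h : ℕ}
  {N : Type} [AddCommGroup N] [Module S N] [Module.Finite S N] [Module.Projective S N]
  {ΦN : N →ₛₗ[φ] N}

theorem exists_eq_smul_of_frobenius_eq_pow_smul (hu : IsRegular u)
    (hφu : ∀ s, u ∣ φ s → u ∣ s) (hE : E ∣ u ^ e)
    (hiso : LinearizationBijectiveAfterInverting φ E ΦN)
    (hht : ∀ x : N, E ^ h • x ∈ Submodule.span S (Set.range ΦN))
    {n n' : N} {D : ℕ} (hD : e * h < D) (hΦn : ΦN n = u ^ D • n') :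
    ∃ n₂, n = u • n₂ := by
  obtain ⟨P, _, _, ι, Φlin, hι, hΦlin, hbij⟩ := hiso
  obtain ⟨r, π, hπ⟩ := Module.Finite.exists_fin' S N
  obtain ⟨ρ, hπρ⟩ := Module.projective_lifting_property π LinearMap.id hπ
  obtain ⟨j, hj, hjι⟩ := hι.exists_injective_pi ρ π hπρ
  have : Module.IsTorsionFree S P := hj.moduleIsTorsionFree j (map_smul j)
  have hEreg : IsRegular E := by
    obtain ⟨c, hc⟩ := hE
    exact (isRegular_mul_iff.mp (hc ▸ hu.pow e)).1
  have hΦlin_inj : Function.Injective Φlin :=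
    Φlin.injective_of_injective_localizedModuleMap
      (by rintro _ ⟨k, rfl⟩; exact (hEreg.pow k).isSMulRegular) hbij.1
  obtain ⟨w, hw⟩ : E ^ h • n' ∈ LinearMap.range Φlin :=
    Submodule.span_le.mpr (by rintro _ ⟨y, rfl⟩; exact ⟨ι y, hΦlin y⟩) (hht n')
  have hιn : E ^ h • ι n = u ^ D • w :=
    hΦlin_inj (by rw [map_smul, map_smul, hΦlin, hΦn, hw, smul_comm])
  have hρn : ∀ i, u ∣ ρ n i := fun i => hφu _ <| dvd_of_pow_mul_eq_pow_mul hu hE hD <| by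
    simpa [hjι] using congrFun (congrArg j hιn) i
  choose v hv using hρn
  refine ⟨π v, ?_⟩
  rw [← map_smul, ← show ρ n = u • v from funext hv]
  exact (LinearMap.congr_fun hπρ n).symm

variable {q : ℕ} {ΦQ : AwayQuotient u N →ₛₗ[φ] AwayQuotient u N}
  {M : Type} [AddCommGroup M] [Module S M] {Φ : M →ₛₗ[φ] M} {f : M →ₗ[S] AwayQuotient u N}

theorem pow_pred_smul_eq_zero (hu : IsRegular u) (hφu : ∀ s, u ∣ φ s → u ∣ s)
    (hE : E ∣ u ^ e) (hiso : LinearizationBijectiveAfterInverting φ E ΦN)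
    (hht : ∀ x : N, E ^ h • x ∈ Submodule.span S (Set.range ΦN))
    (hΦQ : ∀ x k, ΦQ (AwayQuotient.mk u x k) = AwayQuotient.mk u (ΦN x) (q * k))
    (hf : ∀ m, f (Φ m) = ΦQ (f m)) {j : ℕ} (hj : ∀ m, u ^ j • f m = 0)
    (hjq : e * h < (q - 1) * j) (m : M) : u ^ (j - 1) • f m = 0 := by
  have huN : IsSMulRegular N u := hu.isSMulRegular
  have hj0 : 0 < j := Nat.pos_of_ne_zero (by rintro rfl; simp at hjq)
  have hq : q * j = j + (q - 1) * j := by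
    have : 1 ≤ q := Nat.one_le_iff_ne_zero.mpr (by rintro rfl; simp at hjq)
    conv_lhs => rw [← Nat.sub_add_cancel this]
    ring
  obtain ⟨n, hn⟩ := AwayQuotient.exists_eq_mk_of_pow_smul_eq_zero huN (hj m)
  obtain ⟨n', hn'⟩ : ∃ n', ΦN n = u ^ ((q - 1) * j) • n' := by
    have hΦm := hj (Φ m)
    rw [hf, hn, hΦQ, AwayQuotient.smul_mk, AwayQuotient.mk_eq_zero_iff huN] at hΦm
    obtain ⟨n', hn'⟩ := hΦm
    exact ⟨n', huN.pow j (by simp only [hn', smul_smul, ← pow_add, hq])⟩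
  obtain ⟨n₂, rfl⟩ := exists_eq_smul_of_frobenius_eq_pow_smul hu hφu hE hiso hht hjq hn'
  rw [hn, AwayQuotient.smul_mk, smul_smul, ← pow_succ, Nat.sub_add_cancel hj0,
    AwayQuotient.mk_pow_smul]

theorem pow_smul_eq_zero_of_div_le [Module.Finite S M] (hq : 1 < q) (hu : IsRegular u)
    (hφu : ∀ s, u ∣ φ s → u ∣ s) (hE : E ∣ u ^ e)
    (hiso : LinearizationBijectiveAfterInverting φ E ΦN)
    (hht : ∀ x : N, E ^ h • x ∈ Submodule.span S (Set.range ΦN))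
    (hΦQ : ∀ x k, ΦQ (AwayQuotient.mk u x k) = AwayQuotient.mk u (ΦN x) (q * k))
    (hf : ∀ m, f (Φ m) = ΦQ (f m)) {i : ℕ} (hi : e * h / (q - 1) ≤ i) (m : M) :
    u ^ i • f m = 0 := by
  obtain ⟨s, hs⟩ := Module.Finite.exists_pow_smul_eq_zero f AwayQuotient.exists_pow_smul_eq_zero
  induction s with
  | zero => exact pow_smul_eq_zero_of_le (Nat.zero_le i) (hs m)
  | succ s ih =>
    rcases le_or_gt (s + 1) i with hsi | hsi
    · exact pow_smul_eq_zero_of_le hsi (hs m)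
    · refine ih (pow_pred_smul_eq_zero hu hφu hE hiso hht hΦQ hf hs ?_)
      rw [mul_comm (q - 1)]
      exact (Nat.div_lt_iff_lt_mul (by omega)).mp (hi.trans_lt hsi)

end FrobeniusModule

theorem dvd_pow_of_dvd_sub_of_pow_eq_zero {R : Type*} [CommRing R] {E x t : R} {a : ℕ}
    (ht : t ^ a = 0) (hx : t ∣ E - x) : E ∣ x ^ a := by
  obtain ⟨d, hd⟩ := hx
  have h := sub_dvd_pow_sub_pow x (x - E) a
  rwa [sub_sub_cancel, show x - E = t * -d by rw [mul_neg, ← hd, neg_sub], mul_pow, ht,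
    zero_mul, sub_zero] at h

omit [Fintype k'] in
theorem frobenius_zpToWitt (z : ℤ_[p]) :
    WittVector.frobenius (zpToWitt p k' z) = zpToWitt p k' z := by
  ext n
  rw [zpToWitt, RingHom.comp_apply, WittVector.coeff_frobenius_charP, WittVector.map_coeff,
    ← map_pow, ZMod.pow_card]

def frobeniusAlgEquiv : WittVector p k' ≃ₐ[ℤ_[p]] WittVector p k' :=
  AlgEquiv.ofRingEquiv (f := WittVector.frobeniusEquiv p k') (frobenius_zpToWitt p k')

section Coefficients

variable {p k'} {R : Type} [CommRing R] [Algebra ℤ_[p] R]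

theorem IsFrobeniusLift.sigma_eq {σ : WW p k' R →+* WW p k' R} {φ : SS p k' R →+* SS p k' R}
    (hφ : IsFrobeniusLift p k' R σ φ) :
    ⇑σ = Algebra.TensorProduct.congr (frobeniusAlgEquiv p k') AlgEquiv.refl := by
  ext x
  induction x using TensorProduct.induction_on with
  | zero => simp
  | tmul w b =>
    calc σ (w ⊗ₜ b) = σ (w ⊗ₜ 1) * σ (1 ⊗ₜ b) := by
          rw [← map_mul, Algebra.TensorProduct.tmul_mul_tmul, mul_one, one_mul]
      _ = _ := by
          rw [hφ.1, hφ.2.1, Algebra.TensorProduct.tmul_mul_tmul, mul_one, one_mul]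
          rfl
  | add x y hx hy => rw [map_add, map_add, hx, hy]

theorem IsFrobeniusLift.X_dvd_of_X_dvd_apply {σ : WW p k' R →+* WW p k' R}
    {φ : SS p k' R →+* SS p k' R} (hφ : IsFrobeniusLift p k' R σ φ) {g : SS p k' R}
    (hg : X ∣ φ g) : X ∣ g := by
  rw [PowerSeries.X_dvd_iff] at hg ⊢
  have hg0 := hφ.2.2 g 0
  rw [if_pos (dvd_zero p), Nat.zero_div, coeff_zero_eq_constantCoeff, hg] at hg0
  have hσ : Function.Injective σ := hφ.sigma_eq ▸ AlgEquiv.injective _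
  exact hσ (hg0.symm.trans (map_zero σ).symm)

omit [Fintype k'] in
theorem polyToSS_eq_map (E : Polynomial (WittVector p k')) :
    polyToSS p k' R E =
      PowerSeries.map (Algebra.TensorProduct.includeLeft : WittVector p k' →ₐ[ℤ_[p]] WW p k' R)
        (E : PowerSeries (WittVector p k')) := by
  ext n
  simp [polyToSS]

omit [Fintype k'] in
theorem IsEisenstein.polyToSS_dvd_X_pow {e' a : ℕ} {E : Polynomial (WittVector p k')}
    (hE : IsEisenstein p k' e' E) (ha : (p : R) ^ a = 0) :
    polyToSS p k' R E ∣ X ^ (e' * a) := by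
  obtain ⟨hmonic, hdeg, -, hlow, -⟩ := hE
  rw [pow_mul]
  refine dvd_pow_of_dvd_sub_of_pow_eq_zero (t := (p : SS p k' R)) ?_ ?_
  · rw [← map_natCast (AtoSS p k' R), ← map_pow, ha, map_zero]
  · have hpE : (p : Polynomial (WittVector p k')) ∣ E - Polynomial.X ^ e' := by
      rw [← map_natCast Polynomial.C, Polynomial.C_dvd_iff_dvd_coeff]
      intro i
      rcases lt_trichotomy i e' with hi | rfl | hi
      · simpa [Polynomial.coeff_X_pow, hi.ne] using
          Ideal.mem_span_singleton.mp (hlow i hi)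
      · simp [← hdeg, hmonic.coeff_natDegree]
      · simp [Polynomial.coeff_X_pow, hi.ne',
          Polynomial.coeff_eq_zero_of_natDegree_lt (hdeg ▸ hi)]
    simpa [polyToSS_eq_map] using
      map_dvd ((PowerSeries.map (Algebra.TensorProduct.includeLeft :
        WittVector p k' →ₐ[ℤ_[p]] WW p k' R).toRingHom).comp
        (Polynomial.coeToPowerSeries.ringHom (R := WittVector p k'))) hpE

end Coefficients

variable (A : Type) [CommRing A] [Algebra ℤ_[p] A]

theorem statement_8
    (σ : WW p k' A →+* WW p k' A) (φS : SS p k' A →+* SS p k' A)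
    (hφ : IsFrobeniusLift p k' A σ φS)
    (a : ℕ) (ha : (p : A) ^ a = 0)
    (e' : ℕ) (E : Polynomial (WittVector p k')) (hE : IsEisenstein p k' e' E)
    (h : ℕ)
    (M : Type) [AddCommGroup M] [Module (SS p k' A) M]
    [Module.Finite (SS p k' A) M]
    (Φ : M →ₛₗ[φS] M)
    (N : Type) [AddCommGroup N] [Module (SS p k' A) N]
    [Module.Finite (SS p k' A) N] [Module.Projective (SS p k' A) N]
    (ΦN : N →ₛₗ[φS] N)
    (hNiso : LinearizationBijectiveAfterInverting φS (polyToSS p k' A E) ΦN)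
    (hNht : ∀ x : N, polyToSS p k' A E ^ h • x ∈
      Submodule.span (SS p k' A) (Set.range ⇑ΦN)) :
    let pows := Submonoid.powers (PowerSeries.X : SS p k' A)
    let K : Submodule (SS p k' A) (LocalizedModule pows N) :=
      LinearMap.range (LocalizedModule.mkLinearMap pows N)
    ∀ (ΦQ : (LocalizedModule pows N ⧸ K) →ₛₗ[φS] (LocalizedModule pows N ⧸ K)),
      (∀ (x : N) (k : ℕ),
        ΦQ (Submodule.Quotient.mk (LocalizedModule.mk x
            ⟨(PowerSeries.X : SS p k' A) ^ k, pows.pow_mem (Submonoid.mem_powers _) k⟩)) =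
          Submodule.Quotient.mk (LocalizedModule.mk (ΦN x)
            ⟨(PowerSeries.X : SS p k' A) ^ (p * k), pows.pow_mem (Submonoid.mem_powers _) (p * k)⟩)) →
      ∀ (f : M →ₗ[SS p k' A] (LocalizedModule pows N ⧸ K)),
        (∀ m : M, f (Φ m) = ΦQ (f m)) →
        ∀ i : ℕ, e' * a * h / (p - 1) ≤ i →
          ∀ m : M, (PowerSeries.X : SS p k' A) ^ i • f m = 0 := by
  intro pows K ΦQ hΦQ f hf i hi m
  exact pow_smul_eq_zero_of_div_le (Fact.out : p.Prime).one_lt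
    (isLeftRegular_iff_isRegular.mp PowerSeries.X_mul_injective)
    (fun _ => hφ.X_dvd_of_X_dvd_apply) (hE.polyToSS_dvd_X_pow ha) hNiso hNht hΦQ hf hi m
end
end

section
/- Let a ≥ 1 and let A be a Noetherian Z_p-algebra with p^a = 0. Let E(u) ∈ W(k')[u] be an Eisenstein polynomial, let M be a Breuil–Kisin module with A-coefficients, and let N be a finitely generated u-torsion free S_A-module equipped with an S_A-linear map Φ_N : φ*N → N. For i ≥ 0 the submodule u^i M of M is stable under the Φ-structure, and the restriction maps Hom^φ(u^i M, N) → Hom^φ(u^{i+1} M, N) are injective. Moreover, the maps Hom^φ(u^i M, N) → Hom^φ_{S_A[1/u]}(M[1/u], N[1/u]) sending f' to the unique map f with f(m) = u^{−i}·f'(u^i·m) for m ∈ M are injective and compatible as i varies, and every S_A[1/u]-linear map M[1/u] → N[1/u] commuting with the induced Φ-structures arises in this way from some i; that is, the natural map colim_i Hom^φ(u^i M, N) → Hom^φ_{S_A[1/u]}(M[1/u], N[1/u]) is an isomorphism. -/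
open scoped TensorProduct
open PowerSeries

noncomputable section

variable (p : ℕ) [Fact p.Prime]
variable (k' : Type) [Field k'] [Fintype k'] [CharP k' p]

variable (A : Type) [CommRing A] [Algebra ℤ_[p] A]

/-! Since `N` is `u`-torsion free, it embeds into `N[1/u]`, so a map `g : u^i M → N` is the same
as the map `f = u^{-i} g(u^i ·)` on `M[1/u]` subject to `u^i f(M) ⊆ N`; conversely, as `M` is
finitely presented, one power `u^j` clears the denominators of `f(M)`. Because `φ(u^i) = u^{pi}`
becomes a unit after inverting `u`, `g` commutes with the Frobenii exactly when `f` does. -/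

theorem LinearMap.exists_comp_rangeRestrict_eq_of_ker_le {R M M' N : Type*} [CommRing R]
    [AddCommGroup M] [Module R M] [AddCommGroup M'] [Module R M'] [AddCommGroup N] [Module R N]
    {ℓ : M →ₗ[R] M'} {h : M →ₗ[R] N} (hker : LinearMap.ker ℓ ≤ LinearMap.ker h) :
    ∃ g : LinearMap.range ℓ →ₗ[R] N, g ∘ₗ ℓ.rangeRestrict = h :=
  ⟨(LinearMap.ker ℓ).liftQ h hker ∘ₗ ℓ.quotKerEquivRange.symm.toLinearMap, by
    ext m
    exact congrArg _ (ℓ.quotKerEquivRange_symm_apply_image m _)⟩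

namespace LocalizedModule

variable {R M N : Type*} [CommRing R] [AddCommGroup M] [Module R M] [AddCommGroup N] [Module R N]

theorem mkLinearMap_injective_of_isSMulRegular {u : R} (hu : IsSMulRegular N u) :
    Function.Injective (mkLinearMap (Submonoid.powers u) N) := by
  refine (IsLocalizedModule.injective_iff_isRegular (Submonoid.powers u) _).mpr fun c => ?_
  obtain ⟨_, n, rfl⟩ := c
  exact hu.pow n

theorem existsUnique_smul_apply_mkLinearMap_eq (S : Submonoid R) (h : M →ₗ[R] N) {s : R}
    (hs : s ∈ S) :
    ∃! f : LocalizedModule S M →ₗ[Localization S] LocalizedModule S N,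
      ∀ m, s • f (mkLinearMap S M m) = mkLinearMap S N (h m) := by
  have hf₀ (m : M) : s • (IsLocalization.mk' (Localization S) 1 ⟨s, hs⟩ • map S h)
      (mkLinearMap S M m) = mkLinearMap S N (h m) := by
    rw [LinearMap.smul_apply, mkLinearMap_apply, map_mk, ← algebraMap_smul (Localization S) s,
      smul_smul, IsLocalization.mk'_spec' (Localization S) 1 (⟨s, hs⟩ : S), map_one, one_smul,
      mkLinearMap_apply]
  refine ⟨_, hf₀, fun f hf => LinearMap.restrictScalars_injective R <|
    IsLocalizedModule.linearMap_ext S (mkLinearMap S M) (mkLinearMap S N) <|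
      LinearMap.ext fun m => IsLocalizedModule.smul_injective (mkLinearMap S N) ⟨s, hs⟩ ?_⟩
  simp only [LinearMap.comp_apply, LinearMap.restrictScalars_apply, Submonoid.smul_def]
  rw [hf m, hf₀ m]

theorem semiconj_iff_forall_mkLinearMap {S : Submonoid R}
    {φL : Localization S →+* Localization S}
    (f : LocalizedModule S M →ₗ[Localization S] LocalizedModule S N)
    (ΦM : LocalizedModule S M →ₛₗ[φL] LocalizedModule S M)
    (ΦN : LocalizedModule S N →ₛₗ[φL] LocalizedModule S N) :
    Function.Semiconj f ΦM ΦN ↔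
      ∀ m, f (ΦM (mkLinearMap S M m)) = ΦN (f (mkLinearMap S M m)) := by
  refine ⟨fun h m => h _, fun h z => ?_⟩
  induction z using LocalizedModule.induction_on with
  | h m s =>
    -- `mk m s = (1 / s) • mk m 1`
    rw [← one_smul R m, ← mul_one s, ← mk_smul_mk, ΦM.map_smulₛₗ, map_smul, map_smul,
      ΦN.map_smulₛₗ]
    exact congrArg _ (h m)

end LocalizedModule

theorem LinearMap.map_smul_of_algebraMap_comm {R L P Q : Type*} [CommRing R] [CommRing L]
    [Algebra R L] [AddCommGroup P] [Module R P] [Module L P] [IsScalarTower R L P]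
    [AddCommGroup Q] [Module R Q] [Module L Q] [IsScalarTower R L Q] {φ : R →+* R}
    {φL : L →+* L} (hφL : ∀ s, φL (algebraMap R L s) = algebraMap R L (φ s))
    (Ψ : P →ₛₗ[φL] Q) (c : R) (z : P) : Ψ (c • z) = φ c • Ψ z := by
  rw [← algebraMap_smul L c z, Ψ.map_smulₛₗ, hφL, algebraMap_smul]

section Frobenius

variable {R : Type*} [CommRing R] (u : R) {M N : Type*} [AddCommGroup M] [Module R M]
  [AddCommGroup N] [Module R N]

local notation "𝓛" => Localization (Submonoid.powers u)
local notation X "[1/u]" => LocalizedModule (Submonoid.powers u) X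
local notation "ι" => LocalizedModule.mkLinearMap (Submonoid.powers u)

variable (M) in
abbrev powSMulRange (i : ℕ) : Submodule R M :=
  LinearMap.range (LinearMap.lsmul R M (u ^ i))

theorem pow_smul_mem_powSMulRange (i : ℕ) (m : M) : u ^ i • m ∈ powSMulRange u M i :=
  ⟨m, rfl⟩

def CommutesWithFrobenius {φ : R →+* R} (Φ : M →ₛₗ[φ] M) (ΦN : N →ₛₗ[φ] N) (i : ℕ)
    (g : powSMulRange u M i →ₗ[R] N) : Prop :=
  ∀ (x : M) (hx : x ∈ powSMulRange u M i) (hx' : Φ x ∈ powSMulRange u M i),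
    g ⟨Φ x, hx'⟩ = ΦN (g ⟨x, hx⟩)

def ExtendsToLocalization (i : ℕ) (g : powSMulRange u M i →ₗ[R] N) (f : M[1/u] →ₗ[𝓛] N[1/u]) :
    Prop :=
  ∀ (m : M) (hm : u ^ i • m ∈ powSMulRange u M i), u ^ i • f (ι M m) = ι N (g ⟨u ^ i • m, hm⟩)

variable {u} {φ : R →+* R} {r : ℕ}
  {φL : Localization (Submonoid.powers u) →+* Localization (Submonoid.powers u)}

theorem extendsToLocalization_iff {i : ℕ} {g : powSMulRange u M i →ₗ[R] N}
    {f : M[1/u] →ₗ[𝓛] N[1/u]} :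
    ExtendsToLocalization u i g f ↔
      ∀ m, u ^ i • f (ι M m) = ι N ((g ∘ₗ (LinearMap.lsmul R M (u ^ i)).rangeRestrict) m) :=
  forall_congr' fun _ => ⟨fun h => h _, fun h _ => h⟩

theorem LinearMap.map_pow_smul_of_eq_pow (hφu : φ u = u ^ (r + 1)) (Φ : M →ₛₗ[φ] M) (i : ℕ)
    (m : M) : Φ (u ^ i • m) = u ^ i • u ^ (r * i) • Φ m := by
  rw [Φ.map_smulₛₗ, map_pow, hφu, smul_smul, ← pow_mul, ← pow_add]
  ring_nf

theorem map_mem_powSMulRange (hφu : φ u = u ^ (r + 1)) (Φ : M →ₛₗ[φ] M)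
    {i : ℕ} {x : M} (hx : x ∈ powSMulRange u M i) : Φ x ∈ powSMulRange u M i := by
  obtain ⟨m, rfl⟩ := hx
  rw [LinearMap.lsmul_apply, Φ.map_pow_smul_of_eq_pow hφu]
  exact pow_smul_mem_powSMulRange u i _

theorem eq_of_eqOn_powSMulRange_succ (hu : IsSMulRegular N u) {i : ℕ}
    {g g' : powSMulRange u M i →ₗ[R] N}
    (h : ∀ (x : M) (_ : x ∈ powSMulRange u M (i + 1)) (hx : x ∈ powSMulRange u M i),
      g ⟨x, hx⟩ = g' ⟨x, hx⟩) : g = g' := by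
  refine LinearMap.ext fun ⟨_, m, hm⟩ => hu ?_
  subst hm
  simp only [← map_smul]
  exact h _ ⟨m, by simp [pow_succ', mul_smul]⟩ _

theorem existsUnique_extendsToLocalization (i : ℕ) (g : powSMulRange u M i →ₗ[R] N) :
    ∃! f : M[1/u] →ₗ[𝓛] N[1/u], ExtendsToLocalization u i g f := by
  simpa only [extendsToLocalization_iff] using
    LocalizedModule.existsUnique_smul_apply_mkLinearMap_eq _ _ (pow_mem (Submonoid.mem_powers u) i)

theorem eq_of_extendsToLocalization (hu : IsSMulRegular N u) {i : ℕ}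
    {g g' : powSMulRange u M i →ₗ[R] N} {f : M[1/u] →ₗ[𝓛] N[1/u]}
    (hg : ExtendsToLocalization u i g f) (hg' : ExtendsToLocalization u i g' f) : g = g' := by
  refine LinearMap.ext fun ⟨_, m, hm⟩ =>
    LocalizedModule.mkLinearMap_injective_of_isSMulRegular hu ?_
  subst hm
  exact (hg m _).symm.trans (hg' m _)

theorem ExtendsToLocalization.succ {i : ℕ} {g : powSMulRange u M i →ₗ[R] N}
    {g₁ : powSMulRange u M (i + 1) →ₗ[R] N} {f : M[1/u] →ₗ[𝓛] N[1/u]}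
    (hres : ∀ (x : M) (hx₁ : x ∈ powSMulRange u M (i + 1)) (hx : x ∈ powSMulRange u M i),
      g₁ ⟨x, hx₁⟩ = g ⟨x, hx⟩)
    (hg : ExtendsToLocalization u i g f) : ExtendsToLocalization u (i + 1) g₁ f := by
  intro m hm
  have hm' : u ^ (i + 1) • m ∈ powSMulRange u M i := by
    rw [pow_succ, mul_smul]
    exact pow_smul_mem_powSMulRange u i _
  calc u ^ (i + 1) • f (ι M m) = u • u ^ i • f (ι M m) := by rw [pow_succ', mul_smul]
    _ = ι N (g (u • ⟨u ^ i • m, pow_smul_mem_powSMulRange u i m⟩)) := by rw [hg, map_smul, map_smul]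
    _ = ι N (g₁ ⟨u ^ (i + 1) • m, hm⟩) := by
      rw [hres _ hm hm']
      congr 2
      exact Subtype.ext (show u • u ^ i • m = _ by rw [smul_smul, ← pow_succ'])

theorem ExtendsToLocalization.mkLinearMap_apply_frobenius (hφu : φ u = u ^ (r + 1))
    {Φ : M →ₛₗ[φ] M} {i : ℕ} {g : powSMulRange u M i →ₗ[R] N} {f : M[1/u] →ₗ[𝓛] N[1/u]}
    (hg : ExtendsToLocalization u i g f) (m : M) (hx : Φ (u ^ i • m) ∈ powSMulRange u M i) :
    ι N (g ⟨Φ (u ^ i • m), hx⟩) = u ^ ((r + 1) * i) • f (ι M (Φ m)) := by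
  calc ι N (g ⟨Φ (u ^ i • m), hx⟩)
      = ι N (g ⟨u ^ i • u ^ (r * i) • Φ m, pow_smul_mem_powSMulRange u i _⟩) := by
        congr 2; exact Subtype.ext (Φ.map_pow_smul_of_eq_pow hφu i m)
    _ = u ^ i • f (ι M (u ^ (r * i) • Φ m)) := (hg _ _).symm
    _ = u ^ ((r + 1) * i) • f (ι M (Φ m)) := by
        rw [map_smul, LinearMap.map_smul_of_tower, smul_smul, ← pow_add]
        ring_nf

theorem commutesWithFrobenius_iff (hu : IsSMulRegular N u) (hφu : φ u = u ^ (r + 1))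
    (hφL : ∀ s, φL (algebraMap R 𝓛 s) = algebraMap R 𝓛 (φ s))
    {Φ : M →ₛₗ[φ] M} {ΦN : N →ₛₗ[φ] N} {ΦM' : M[1/u] →ₛₗ[φL] M[1/u]}
    {ΦN' : N[1/u] →ₛₗ[φL] N[1/u]} (hΦM' : ∀ m, ΦM' (ι M m) = ι M (Φ m))
    (hΦN' : ∀ x, ΦN' (ι N x) = ι N (ΦN x)) {i : ℕ} {g : powSMulRange u M i →ₗ[R] N}
    {f : M[1/u] →ₗ[𝓛] N[1/u]} (hg : ExtendsToLocalization u i g f) :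
    CommutesWithFrobenius u Φ ΦN i g ↔ Function.Semiconj f ΦM' ΦN' := by
  have hΦNg (m : M) : ι N (ΦN (g ⟨u ^ i • m, pow_smul_mem_powSMulRange u i m⟩)) =
      u ^ ((r + 1) * i) • ΦN' (f (ι M m)) := by
    rw [← hΦN', ← hg, LinearMap.map_smul_of_algebraMap_comm hφL, map_pow, hφu, ← pow_mul]
  rw [LocalizedModule.semiconj_iff_forall_mkLinearMap]
  constructor
  · intro hc m
    refine IsLocalizedModule.smul_injective (ι N)
      ⟨_, pow_mem (Submonoid.mem_powers u) ((r + 1) * i)⟩ ?_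
    simp only [Submonoid.smul_def, hΦM']
    rw [← hg.mkLinearMap_apply_frobenius hφu m (map_mem_powSMulRange hφu Φ ⟨m, rfl⟩), ← hΦNg, hc]
  · rintro he _ ⟨m, rfl⟩ hx
    apply LocalizedModule.mkLinearMap_injective_of_isSMulRegular hu
    refine (hg.mkLinearMap_apply_frobenius hφu m hx).trans ?_
    rw [← hΦM', he]
    exact (hΦNg m).symm

theorem exists_extendsToLocalization [Module.FinitePresentation R M] (hu : IsSMulRegular N u)
    (f : M[1/u] →ₗ[𝓛] N[1/u]) :
    ∃ (i : ℕ) (g : powSMulRange u M i →ₗ[R] N), ExtendsToLocalization u i g f := by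
  obtain ⟨h, ⟨_, i, rfl⟩, hh⟩ := Module.FinitePresentation.exists_lift_of_isLocalizedModule
    (Submonoid.powers u) (ι N) (f.restrictScalars R ∘ₗ ι M)
  have hh' (m : M) : ι N (h m) = u ^ i • f (ι M m) := LinearMap.congr_fun hh m
  obtain ⟨g, rfl⟩ := LinearMap.exists_comp_rangeRestrict_eq_of_ker_le
    (ℓ := LinearMap.lsmul R M (u ^ i)) (h := h) fun m hm => by
      apply LocalizedModule.mkLinearMap_injective_of_isSMulRegular hu
      rw [hh', ← LinearMap.map_smul_of_tower, ← map_smul, ← LinearMap.lsmul_apply,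
        LinearMap.mem_ker.mp hm, map_zero, map_zero, map_zero]
  exact ⟨i, g, extendsToLocalization_iff.mpr fun m => (hh' m).symm⟩

end Frobenius

theorem PowerSeries.map_X_eq_X_pow {W : Type*} [CommRing W] {q : ℕ} (hq : 0 < q)
    {σ : W →+* W} {φ : W⟦X⟧ →+* W⟦X⟧}
    (hφ : ∀ g n, coeff n (φ g) = if q ∣ n then σ (coeff (n / q) g) else 0) : φ X = X ^ q := by
  ext n
  rw [hφ, coeff_X_pow, coeff_X]
  by_cases hn : n = q
  · simp [hn, Nat.div_self hq]
  · have : ¬ (q ∣ n ∧ n / q = 1) := fun ⟨hd, h1⟩ =>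
      hn (by rw [← Nat.div_mul_cancel hd, h1, one_mul])
    split_ifs <;> simp_all

theorem statement_9
    (σ : WW p k' A →+* WW p k' A) (φS : SS p k' A →+* SS p k' A)
    (hφ : IsFrobeniusLift p k' A σ φS)
    (M : Type) [AddCommGroup M] [Module (SS p k' A) M]
    [Module.Finite (SS p k' A) M] [Module.Projective (SS p k' A) M]
    (Φ : M →ₛₗ[φS] M)
    (N : Type) [AddCommGroup N] [Module (SS p k' A) N]
    (hNtf : ∀ x : N, (PowerSeries.X : SS p k' A) • x = 0 → x = 0)
    (ΦN : N →ₛₗ[φS] N)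
    -- the Frobenius on `𝔖_A[1/u]` and the induced Frobenii on `M[1/u]`, `N[1/u]`:
    (φS' : Localization (Submonoid.powers (PowerSeries.X : SS p k' A)) →+*
      Localization (Submonoid.powers (PowerSeries.X : SS p k' A)))
    (hφS' : ∀ s : SS p k' A,
      φS' (algebraMap (SS p k' A) (Localization (Submonoid.powers (PowerSeries.X : SS p k' A))) s) =
        algebraMap (SS p k' A) (Localization (Submonoid.powers (PowerSeries.X : SS p k' A))) (φS s))
    (ΦM' : LocalizedModule (Submonoid.powers (PowerSeries.X : SS p k' A)) M →ₛₗ[φS']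
      LocalizedModule (Submonoid.powers (PowerSeries.X : SS p k' A)) M)
    (hΦM' : ∀ m : M,
      ΦM' (LocalizedModule.mkLinearMap (Submonoid.powers (PowerSeries.X : SS p k' A)) M m) =
        LocalizedModule.mkLinearMap (Submonoid.powers (PowerSeries.X : SS p k' A)) M (Φ m))
    (ΦN' : LocalizedModule (Submonoid.powers (PowerSeries.X : SS p k' A)) N →ₛₗ[φS']
      LocalizedModule (Submonoid.powers (PowerSeries.X : SS p k' A)) N)
    (hΦN' : ∀ x : N,
      ΦN' (LocalizedModule.mkLinearMap (Submonoid.powers (PowerSeries.X : SS p k' A)) N x) =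
        LocalizedModule.mkLinearMap (Submonoid.powers (PowerSeries.X : SS p k' A)) N (ΦN x)) :
    -- `U i` is the submodule `u^i M ⊆ M`
    let U : ℕ → Submodule (SS p k' A) M := fun i =>
      LinearMap.range (LinearMap.lsmul (SS p k' A) M ((PowerSeries.X : SS p k' A) ^ i))
    let mkM := LocalizedModule.mkLinearMap (Submonoid.powers (PowerSeries.X : SS p k' A)) M
    let mkN := LocalizedModule.mkLinearMap (Submonoid.powers (PowerSeries.X : SS p k' A)) N
    -- `Comm i g` says that `g : u^iM → N` commutes with the Frobenii
    let Comm : (i : ℕ) → (↥(U i) →ₗ[SS p k' A] N) → Prop := fun i g =>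
      ∀ (x : M) (hx : x ∈ U i) (hx' : Φ x ∈ U i), g ⟨Φ x, hx'⟩ = ΦN (g ⟨x, hx⟩)
    -- `Mat i g f` says that `f : M[1/u] → N[1/u]` corresponds to `g : u^iM → N`, i.e.
    -- `u^i · f(m) = g(u^i·m)` for all `m`
    let Mat : (i : ℕ) → (↥(U i) →ₗ[SS p k' A] N) →
        (LocalizedModule (Submonoid.powers (PowerSeries.X : SS p k' A)) M
          →ₗ[Localization (Submonoid.powers (PowerSeries.X : SS p k' A))]
          LocalizedModule (Submonoid.powers (PowerSeries.X : SS p k' A)) N) → Prop :=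
      fun i g f => ∀ (m : M) (hm : (PowerSeries.X : SS p k' A) ^ i • m ∈ U i),
        (PowerSeries.X : SS p k' A) ^ i • f (mkM m) =
          mkN (g ⟨(PowerSeries.X : SS p k' A) ^ i • m, hm⟩)
    -- (i) stability of `u^iM` under the Frobenius:
    (∀ (i : ℕ) (x : M), x ∈ U i → Φ x ∈ U i) ∧
    -- (ii) injectivity of the restriction maps `Hom^φ(u^iM,N) → Hom^φ(u^{i+1}M,N)`:
    (∀ (i : ℕ) (g g' : ↥(U i) →ₗ[SS p k' A] N), Comm i g → Comm i g' →
      (∀ (x : M) (hx1 : x ∈ U (i + 1)) (hx0 : x ∈ U i), g ⟨x, hx0⟩ = g' ⟨x, hx0⟩) →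
      g = g') ∧
    -- (iii) each `g` determines a unique `f`:
    (∀ (i : ℕ) (g : ↥(U i) →ₗ[SS p k' A] N), Comm i g → ∃! f, Mat i g f) ∧
    -- (iv) the resulting `f` is `Φ`-equivariant:
    (∀ (i : ℕ) (g : ↥(U i) →ₗ[SS p k' A] N) f, Comm i g → Mat i g f →
      ∀ z, f (ΦM' z) = ΦN' (f z)) ∧
    -- (v) the maps `g ↦ f` are injective:
    (∀ (i : ℕ) (g g' : ↥(U i) →ₗ[SS p k' A] N) f, Comm i g → Comm i g' →
      Mat i g f → Mat i g' f → g = g') ∧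
    -- (vi) the maps `g ↦ f` are compatible as `i` varies:
    (∀ (i : ℕ) (g : ↥(U i) →ₗ[SS p k' A] N) (g₁ : ↥(U (i + 1)) →ₗ[SS p k' A] N) f,
      Comm i g → Comm (i + 1) g₁ →
      (∀ (x : M) (hx1 : x ∈ U (i + 1)) (hx0 : x ∈ U i), g₁ ⟨x, hx1⟩ = g ⟨x, hx0⟩) →
      Mat i g f → Mat (i + 1) g₁ f) ∧
    -- (vii) every `Φ`-equivariant `f` arises from some `i` and `g`:
    (∀ f, (∀ z, f (ΦM' z) = ΦN' (f z)) →
      ∃ (i : ℕ) (g : ↥(U i) →ₗ[SS p k' A] N), Comm i g ∧ Mat i g f) := by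
  have hu : IsSMulRegular N (X : SS p k' A) := isSMulRegular_iff_right_eq_zero_of_smul.mpr hNtf
  have hφX : φS X = X ^ (p - 1 + 1) := by
    rw [Nat.sub_add_cancel (Fact.out : p.Prime).one_le]
    exact PowerSeries.map_X_eq_X_pow (Fact.out : p.Prime).pos hφ.2.2
  have := Module.finitePresentation_of_projective (SS p k' A) M
  refine ⟨fun _ _ => map_mem_powSMulRange hφX Φ,
    fun _ _ _ _ _ => eq_of_eqOn_powSMulRange_succ hu,
    fun i g _ => existsUnique_extendsToLocalization i g,
    fun _ _ _ hg hf => (commutesWithFrobenius_iff hu hφX hφS' hΦM' hΦN' hf).mp hg,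
    fun _ _ _ _ _ _ => eq_of_extendsToLocalization hu,
    fun _ _ _ _ _ _ => ExtendsToLocalization.succ,
    fun f hf => ?_⟩
  obtain ⟨i, g, hg⟩ := exists_extendsToLocalization hu f
  exact ⟨i, g, (commutesWithFrobenius_iff hu hφX hφS' hΦM' hΦN' hg).mpr hf, hg⟩
end
end

section
/- Let (r,a,c) and (s,b,d) be two rank one data. Then the cokernel of ∂ : C^0 → C^1 is a finite-dimensional F-vector space, and dim_F coker ∂ = dim_F ker ∂ + Σ_{i=0}^{f−1} #{ j ∈ Z : 0 ≤ j < r_i and j ≡ r_i + c_i − d_i (mod m) }. (In the paper's formulation: dim_F Ext^1(M(r,a,c), M(s,b,d)) = Δ + Σ_{i=0}^{f−1} #{ j ∈ [0, r_i) : j ≡ r_i + c_i − d_i (mod e(K'/K)) }, where Δ = dim_F Hom(M(r,a,c), M(s,b,d)).) -/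
open PowerSeries

noncomputable section

/-- The map `φ : Σ αₙ uⁿ ↦ Σ αₙ u^{p·n}` on `F⟦u⟧`. -/
noncomputable def phiPS (p : ℕ) (F : Type) [CommRing F] :
    PowerSeries F →ₗ[F] PowerSeries F where
  toFun g := PowerSeries.mk fun n => if p ∣ n then PowerSeries.coeff (n / p) g else 0
  map_add' g h := by
    ext n
    by_cases hn : p ∣ n <;> simp [PowerSeries.coeff_mk, hn]
  map_smul' t g := by
    ext n
    by_cases hn : p ∣ n <;> simp [PowerSeries.coeff_mk, hn]

/-- The space of tuples `(μ_i)_{i ∈ ℤ/f}` of power series such that every nonzero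
coefficient of `μ_i` occurs in a degree `n` with `n ≡ γ i (mod m)`. -/
def Ctuples (F : Type) [Field F] (f m : ℕ) (γ : ZMod f → ZMod m) :
    Submodule F (ZMod f → PowerSeries F) where
  carrier := {μ | ∀ (i : ZMod f) (n : ℕ), PowerSeries.coeff n (μ i) ≠ 0 → (n : ZMod m) = γ i}
  add_mem' := by
    intro μ ν hμ hν i n hn
    rw [Pi.add_apply, map_add] at hn
    by_cases h1 : PowerSeries.coeff n (μ i) = 0
    · refine hν i n fun h2 => hn ?_
      rw [h1, h2, add_zero]
    · exact hμ i n h1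
  zero_mem' := by
    intro i n hn
    simp at hn
  smul_mem' := by
    intro t μ hμ i n hn
    refine hμ i n fun h => hn ?_
    rw [Pi.smul_apply, map_smul, h, smul_zero]

/-- The map `∂ : (μ_i)_i ↦ (−a_i u^{r_i} μ_i + b_i u^{s_i} φ(μ_{i−1}))_i`. -/
noncomputable def Dmap (p : ℕ) (F : Type) [Field F] (f : ℕ) (r s : ZMod f → ℕ)
    (a b : ZMod f → Fˣ) :
    (ZMod f → PowerSeries F) →ₗ[F] (ZMod f → PowerSeries F) :=
  LinearMap.pi fun i =>
    (LinearMap.mulLeft F (PowerSeries.C (b i : F) * PowerSeries.X ^ s i)).comp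
        ((phiPS p F).comp (LinearMap.proj (i - 1)))
      - (LinearMap.mulLeft F (PowerSeries.C (a i : F) * PowerSeries.X ^ r i)).comp
        (LinearMap.proj i)


/-!
Fix `N` larger than every `r i`. In degree `r i + n` the coefficient of `(∂μ)_i` is
`-a_i μ_i[n]` plus `b_i μ_{i-1}[k]` with `p k + s i = r i + n`, hence `k < n` when `n ≥ N`.
So `∂` maps the tuples vanishing below `N` bijectively onto the tuples vanishing below
`r i + N` (by recursion on `n`), and it has the same kernel and cokernel as the induced map
between the finite-dimensional quotients by these subspaces. The index is therefore the
difference of their dimensions: the number of degrees `< r i + N`, resp. `< N`, in the relevant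
residue classes, which leaves the degrees `< r i`.
-/

open Finset Module

section QuotientIndex

open LinearMap

variable {K M N : Type*} [Field K] [AddCommGroup M] [Module K M] [AddCommGroup N] [Module K N]
  {g : M →ₗ[K] N} {A : Submodule K M} {B : Submodule K N}

theorem Submodule.injective_mkQ_comp_subtype {C : Submodule K M} (h : Disjoint A C) :
    Function.Injective (A.mkQ ∘ₗ C.subtype) := by
  rw [← ker_eq_bot, ker_comp, Submodule.ker_mkQ, ← Submodule.disjoint_iff_comap_eq_bot]
  exact h.symm

theorem LinearMap.finiteDimensional_ker_of_disjoint [FiniteDimensional K (M ⧸ A)]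
    (h : Disjoint A (ker g)) : FiniteDimensional K (ker g) :=
  Module.Finite.of_injective _ (Submodule.injective_mkQ_comp_subtype h)

theorem LinearMap.finiteDimensional_quotient_range_of_le [FiniteDimensional K (N ⧸ B)]
    (h : B ≤ range g) : FiniteDimensional K (N ⧸ range g) :=
  Module.Finite.of_surjective _ (Submodule.factor_surjective h)

theorem LinearMap.finrank_quotient_range_add_finrank_quotient (hmap : A.map g = B)
    (hdisj : Disjoint A (ker g)) [FiniteDimensional K (M ⧸ A)]
    [FiniteDimensional K (N ⧸ B)] :
    finrank K (N ⧸ range g) + finrank K (M ⧸ A) =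
      finrank K (ker g) + finrank K (N ⧸ B) := by
  let gbar := A.mapQ B g (hmap ▸ Submodule.le_comap_map g A)
  have hker : ker gbar = range (A.mkQ ∘ₗ (ker g).subtype) := by
    rw [Submodule.ker_mapQ, ← hmap, Submodule.comap_map_eq, Submodule.map_sup,
      Submodule.mkQ_map_self, bot_sup_eq, range_comp, Submodule.range_subtype]
  have hcoker : ((N ⧸ B) ⧸ range gbar) ≃ₗ[K] N ⧸ range g :=
    (Submodule.quotEquivOfEq _ _ (Submodule.range_mapQ _ _ _ _)).trans
      (Submodule.quotientQuotientEquivQuotient B (range g) (hmap ▸ LinearMap.map_le_range))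
  have hrank := gbar.finrank_range_add_finrank_ker
  have hquot := (range gbar).finrank_quotient_add_finrank
  rw [hker, finrank_range_of_inj (Submodule.injective_mkQ_comp_subtype hdisj)] at hrank
  rw [← hcoker.finrank_eq]
  omega

end QuotientIndex

theorem Finset.card_filter_range_add_natCast_eq {m : ℕ} (R N : ℕ) (γ : ZMod m) :
    #{n ∈ range (R + N) | ((n : ℕ) : ZMod m) = γ} =
      #{n ∈ range R | ((n : ℕ) : ZMod m) = γ} +
        #{n ∈ range N | ((n : ℕ) : ZMod m) = γ - R} := by
  simp only [← Nat.count_eq_card_filter_range, Nat.count_add, Nat.cast_add,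
    ← eq_sub_iff_add_eq']

section Truncation

variable {F : Type} [Field F] {f m : ℕ}

variable (F f) in
def vanishingBelow (B : ZMod f → ℕ) : Submodule F (ZMod f → F⟦X⟧) where
  carrier := {μ | ∀ i, ∀ n < B i, coeff n (μ i) = 0}
  add_mem' hμ hν i n hn := by simp [hμ i n hn, hν i n hn]
  zero_mem' := by simp
  smul_mem' t μ hμ i n hn := by simp [hμ i n hn]

variable (F) in
def lowCoeffs (γ : ZMod f → ZMod m) (B : ZMod f → ℕ) :
    Ctuples F f m γ →ₗ[F]
      (i : ZMod f) → ({n ∈ range (B i) | ((n : ℕ) : ZMod m) = γ i} : Finset ℕ) → F :=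
  LinearMap.pi fun i => LinearMap.pi fun n =>
    coeff n.1 ∘ₗ LinearMap.proj i ∘ₗ (Ctuples F f m γ).subtype

theorem ker_lowCoeffs (γ : ZMod f → ZMod m) (B : ZMod f → ℕ) :
    LinearMap.ker (lowCoeffs F γ B) =
      (vanishingBelow F f B).comap (Ctuples F f m γ).subtype := by
  ext μ
  simp only [LinearMap.mem_ker, Submodule.mem_comap, Submodule.subtype_apply]
  constructor
  · intro h i n hn
    by_contra hne
    exact hne (congrFun (congrFun h i) ⟨n, by simp [hn, μ.2 i n hne]⟩)
  · intro h
    funext i n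
    exact h i n (mem_range.mp (mem_filter.mp n.2).1)

theorem lowCoeffs_surjective (γ : ZMod f → ZMod m) (B : ZMod f → ℕ) :
    Function.Surjective (lowCoeffs F γ B) := by
  intro v
  refine ⟨⟨fun i => mk fun n => if h : n ∈ _ then v i ⟨n, h⟩ else 0, fun i n hn => ?_⟩,
    ?_⟩
  · rw [coeff_mk] at hn
    split_ifs at hn with h
    · exact (mem_filter.mp h).2
    · exact absurd rfl hn
  · funext i n
    simp only [lowCoeffs, LinearMap.pi_apply, LinearMap.comp_apply, Submodule.subtype_apply,
      LinearMap.proj_apply, coeff_mk, dif_pos n.2]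

variable (F) in
def quotientVanishingBelowEquiv (γ : ZMod f → ZMod m) (B : ZMod f → ℕ) :
    (Ctuples F f m γ ⧸ (vanishingBelow F f B).comap (Ctuples F f m γ).subtype) ≃ₗ[F]
      (i : ZMod f) → ({n ∈ range (B i) | ((n : ℕ) : ZMod m) = γ i} : Finset ℕ) → F :=
  (Submodule.quotEquivOfEq _ _ (ker_lowCoeffs γ B)).symm.trans
    ((lowCoeffs F γ B).quotKerEquivOfSurjective (lowCoeffs_surjective γ B))

instance [NeZero f] (γ : ZMod f → ZMod m) (B : ZMod f → ℕ) :
    FiniteDimensional F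
      (Ctuples F f m γ ⧸ (vanishingBelow F f B).comap (Ctuples F f m γ).subtype) :=
  (quotientVanishingBelowEquiv F γ B).symm.finiteDimensional

theorem finrank_quotient_vanishingBelow [NeZero f] (γ : ZMod f → ZMod m) (B : ZMod f → ℕ) :
    finrank F (Ctuples F f m γ ⧸ (vanishingBelow F f B).comap (Ctuples F f m γ).subtype) =
      ∑ i, #{n ∈ range (B i) | ((n : ℕ) : ZMod m) = γ i} := by
  simp [(quotientVanishingBelowEquiv F γ B).finrank_eq, Module.finrank_pi_fintype]

end Truncation

section Dmap

variable {F : Type} [Field F] {f m : ℕ} (p : ℕ) (r s : ZMod f → ℕ) (a b : ZMod f → Fˣ)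

theorem coeff_phiPS (g : F⟦X⟧) (t : ℕ) :
    coeff t (phiPS p F g) = if p ∣ t then coeff (t / p) g else 0 := by
  simp [phiPS, coeff_mk]

theorem coeff_Dmap (μ : ZMod f → F⟦X⟧) (i : ZMod f) (t : ℕ) :
    coeff t (Dmap p F f r s a b μ i) =
      (if s i ≤ t ∧ p ∣ t - s i then (b i : F) * coeff ((t - s i) / p) (μ (i - 1)) else 0) -
        if r i ≤ t then (a i : F) * coeff (t - r i) (μ i) else 0 := by
  simp only [Dmap, LinearMap.pi_apply, LinearMap.sub_apply, LinearMap.comp_apply,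
    LinearMap.mulLeft_apply, LinearMap.proj_apply, map_sub, mul_assoc, coeff_C_mul,
    coeff_X_pow_mul', coeff_phiPS]
  split_ifs <;> simp_all

theorem coeff_add_Dmap (μ : ZMod f → F⟦X⟧) (i : ZMod f) (n : ℕ) :
    coeff (r i + n) (Dmap p F f r s a b μ i) =
      (if s i ≤ r i + n ∧ p ∣ r i + n - s i then
          (b i : F) * coeff ((r i + n - s i) / p) (μ (i - 1)) else 0) -
        (a i : F) * coeff n (μ i) := by
  simp [coeff_Dmap]

theorem add_sub_div_lt {p r s n : ℕ} (hp : 2 ≤ p) (hr : r < n) : (r + n - s) / p < n :=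
  Nat.div_lt_of_lt_mul (by have := Nat.mul_le_mul_right n hp; omega)

theorem Dmap_mem_Ctuples {γ : ZMod f → ZMod m}
    (hγ : ∀ i, (p : ZMod m) * γ (i - 1) + s i = r i + γ i) {μ : ZMod f → F⟦X⟧}
    (hμ : μ ∈ Ctuples F f m γ) :
    Dmap p F f r s a b μ ∈ Ctuples F f m fun i => r i + γ i := by
  intro i t ht
  by_contra hne
  dsimp only at hne
  refine ht ?_
  have hsrc : (if s i ≤ t ∧ p ∣ t - s i then
      (b i : F) * coeff ((t - s i) / p) (μ (i - 1)) else 0) = 0 := by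
    split_ifs with hst
    · refine mul_eq_zero_of_right _ (by_contra fun hk => hne ?_)
      calc (t : ZMod m) = s i + p * ((t - s i) / p : ℕ) := by
            rw [← Nat.cast_mul, Nat.mul_div_cancel' hst.2, ← Nat.cast_add,
              Nat.add_sub_cancel' hst.1]
        _ = r i + γ i := by rw [hμ _ _ hk, ← hγ, add_comm]
    · rfl
  have hshift : (if r i ≤ t then (a i : F) * coeff (t - r i) (μ i) else 0) = 0 := by
    split_ifs with hrt
    · refine mul_eq_zero_of_right _ (by_contra fun hk => hne ?_)
      rw [← hμ _ _ hk, Nat.cast_sub hrt, add_sub_cancel]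
    · rfl
  rw [coeff_Dmap, hsrc, hshift, sub_zero]

variable {p r s} in
theorem Dmap_mem_vanishingBelow (hp : 2 ≤ p) {N : ℕ} (hN : ∀ i, r i < N)
    {μ : ZMod f → F⟦X⟧} (hμ : μ ∈ vanishingBelow F f fun _ => N) :
    Dmap p F f r s a b μ ∈ vanishingBelow F f fun i => r i + N := by
  intro i t ht
  dsimp only at ht
  have hsrc : (t - s i) / p < N :=
    Nat.div_lt_of_lt_mul (by have := hN i; have := Nat.mul_le_mul_right N hp; omega)
  have hshift : t - r i < N := by have := hN i; omega
  simp [coeff_Dmap, hμ _ _ hsrc, hμ _ _ hshift]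

variable {p r s} in
theorem eq_zero_of_Dmap_eq_zero (hp : 2 ≤ p) {N : ℕ} (hN : ∀ i, r i < N)
    {μ : ZMod f → F⟦X⟧} (hμ : μ ∈ vanishingBelow F f fun _ => N)
    (hD : Dmap p F f r s a b μ = 0) : μ = 0 := by
  suffices ∀ n i, coeff n (μ i) = 0 by
    funext i
    ext n
    simpa using this n i
  intro n
  induction n using Nat.strong_induction_on with
  | _ n ih =>
    intro i
    rcases lt_or_ge n N with hn | hn
    · exact hμ i n hn
    have h := congrArg (coeff (r i + n)) (congrFun hD i)
    rw [coeff_add_Dmap, ih _ (add_sub_div_lt hp (by have := hN i; omega))] at h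
    simpa using h

/-- The degree `r i + n` part of `∂μ = h` determines `μ_i[n]` from `μ_{i-1}` in degree
`(r i + n - s i) / p`, which is `< n` once `n > r i`. -/
def invDmapCoeff (γ : ZMod f → ZMod m) (N : ℕ) (h : ZMod f → F⟦X⟧) (n : ℕ)
    (i : ZMod f) : F :=
  if N ≤ n ∧ (n : ZMod m) = γ i then
    (a i : F)⁻¹ * ((b i : F) *
      (if hk : s i ≤ r i + n ∧ p ∣ r i + n - s i ∧ (r i + n - s i) / p < n then
        invDmapCoeff γ N h ((r i + n - s i) / p) (i - 1) else 0) - coeff (r i + n) (h i))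
  else 0
termination_by n
decreasing_by exact hk.2.2

def invDmap (γ : ZMod f → ZMod m) (N : ℕ) (h : ZMod f → F⟦X⟧) : ZMod f → F⟦X⟧ :=
  fun i => mk fun n => invDmapCoeff p r s a b γ N h n i

theorem coeff_invDmap (γ : ZMod f → ZMod m) (N : ℕ) (h : ZMod f → F⟦X⟧) (n : ℕ)
    (i : ZMod f) :
    coeff n (invDmap p r s a b γ N h i) = invDmapCoeff p r s a b γ N h n i :=
  coeff_mk _ _

theorem invDmap_mem_vanishingBelow (γ : ZMod f → ZMod m) (N : ℕ) (h : ZMod f → F⟦X⟧) :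
    invDmap p r s a b γ N h ∈ vanishingBelow F f fun _ => N := by
  intro i n hn
  rw [coeff_invDmap, invDmapCoeff, if_neg fun hn' => (Nat.not_le.mpr hn) hn'.1]

theorem invDmap_mem_Ctuples (γ : ZMod f → ZMod m) (N : ℕ) (h : ZMod f → F⟦X⟧) :
    invDmap p r s a b γ N h ∈ Ctuples F f m γ := by
  intro i n hn
  rw [coeff_invDmap, invDmapCoeff] at hn
  by_contra hne
  exact hn (if_neg fun h' => hne h'.2)

variable {p r s} in
theorem invDmapCoeff_of_le (hp : 2 ≤ p) {N : ℕ} (hN : ∀ i, r i < N) (γ : ZMod f → ZMod m)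
    (h : ZMod f → F⟦X⟧) {n : ℕ} {i : ZMod f} (hn : N ≤ n) (hγn : (n : ZMod m) = γ i) :
    (a i : F) * invDmapCoeff p r s a b γ N h n i =
      (if s i ≤ r i + n ∧ p ∣ r i + n - s i then
        (b i : F) * invDmapCoeff p r s a b γ N h ((r i + n - s i) / p) (i - 1) else 0) -
        coeff (r i + n) (h i) := by
  have hsrc : (r i + n - s i) / p < n := add_sub_div_lt hp (by have := hN i; omega)
  conv_lhs => rw [invDmapCoeff, if_pos ⟨hn, hγn⟩]
  rw [← mul_assoc, mul_inv_cancel₀ (a i).ne_zero, one_mul]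
  congr 1
  by_cases hst : s i ≤ r i + n ∧ p ∣ r i + n - s i
  · rw [if_pos hst, dif_pos ⟨hst.1, hst.2, hsrc⟩]
  · rw [if_neg hst, dif_neg fun h' => hst ⟨h'.1, h'.2.1⟩, mul_zero]

variable {p r s} in
theorem Dmap_invDmap (hp : 2 ≤ p) {N : ℕ} (hN : ∀ i, r i < N) {γ : ZMod f → ZMod m}
    (hγ : ∀ i, (p : ZMod m) * γ (i - 1) + s i = r i + γ i) {h : ZMod f → F⟦X⟧}
    (hhC : h ∈ Ctuples F f m fun i => r i + γ i)
    (hhN : h ∈ vanishingBelow F f fun i => r i + N) :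
    Dmap p F f r s a b (invDmap p r s a b γ N h) = h := by
  funext i
  ext t
  rcases lt_or_ge t (r i + N) with ht | ht
  · rw [Dmap_mem_vanishingBelow a b hp hN (invDmap_mem_vanishingBelow p r s a b γ N h) i t ht,
      hhN i t ht]
  obtain ⟨n, rfl⟩ : ∃ n, t = r i + n := ⟨t - r i, by omega⟩
  by_cases hγn : (n : ZMod m) = γ i
  · simp_rw [coeff_add_Dmap, coeff_invDmap]
    rw [invDmapCoeff_of_le a b hp hN γ h (by omega) hγn]
    ring
  · have hvanish : ∀ g ∈ Ctuples F f m (fun i => r i + γ i), coeff (r i + n) (g i) = 0 :=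
      fun g hg => by_contra fun hne => hγn (by simpa using hg i _ hne)
    rw [hvanish _ (Dmap_mem_Ctuples p r s a b hγ (invDmap_mem_Ctuples p r s a b γ N h)),
      hvanish _ hhC]

end Dmap

section DmapCtuples

variable {F : Type} [Field F] {f m : ℕ} {p : ℕ} {r s : ZMod f → ℕ} (a b : ZMod f → Fˣ)
  {γ : ZMod f → ZMod m} (hγ : ∀ i, (p : ZMod m) * γ (i - 1) + s i = r i + γ i)

def DmapCtuples : Ctuples F f m γ →ₗ[F] Ctuples F f m fun i => r i + γ i :=
  (Dmap p F f r s a b).restrict fun _ => Dmap_mem_Ctuples p r s a b hγ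

theorem map_DmapCtuples_vanishingBelow (hp : 2 ≤ p) {N : ℕ} (hN : ∀ i, r i < N) :
    ((vanishingBelow F f fun _ => N).comap (Ctuples F f m γ).subtype).map
        (DmapCtuples a b hγ) =
      (vanishingBelow F f fun i => r i + N).comap
        (Ctuples F f m fun i => r i + γ i).subtype := by
  ext h
  simp only [Submodule.mem_map, Submodule.mem_comap, Submodule.subtype_apply]
  constructor
  · rintro ⟨μ, hμ, rfl⟩
    exact Dmap_mem_vanishingBelow a b hp hN hμ
  · intro hhN
    exact ⟨⟨_, invDmap_mem_Ctuples p r s a b γ N h⟩,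
      invDmap_mem_vanishingBelow p r s a b γ N h,
      Subtype.ext (Dmap_invDmap a b hp hN hγ h.2 hhN)⟩

theorem disjoint_vanishingBelow_ker_DmapCtuples (hp : 2 ≤ p) {N : ℕ} (hN : ∀ i, r i < N) :
    Disjoint ((vanishingBelow F f fun _ => N).comap (Ctuples F f m γ).subtype)
      (LinearMap.ker (DmapCtuples a b hγ)) := by
  rw [Submodule.disjoint_def]
  intro μ hμ hD
  exact Subtype.ext (eq_zero_of_Dmap_eq_zero a b hp hN hμ (congrArg Subtype.val hD))

end DmapCtuples

theorem statement_11_general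
    (p : ℕ) (hp : p.Prime) (F : Type) [Field F]
    (f m : ℕ) [NeZero f]
    (r : ZMod f → ℕ) (a : ZMod f → Fˣ) (c : ZMod f → ZMod m)
    (hc : ∀ i, (p : ZMod m) * c (i - 1) = c i + (r i : ZMod m))
    (s : ZMod f → ℕ) (b : ZMod f → Fˣ) (d : ZMod f → ZMod m)
    (hd : ∀ i, (p : ZMod m) * d (i - 1) = d i + (s i : ZMod m)) :
    let C0 := Ctuples F f m fun i => c i - d i
    let C1 := Ctuples F f m fun i => (r i : ZMod m) + (c i - d i)
    let D := Dmap p F f r s a b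
    let Im : Submodule F ↥C1 := Submodule.comap C1.subtype (Submodule.map D C0)
    let Kr : Submodule F ↥C0 := Submodule.comap C0.subtype (LinearMap.ker D)
    FiniteDimensional F (↥C1 ⧸ Im) ∧ FiniteDimensional F ↥Kr ∧
      Module.finrank F (↥C1 ⧸ Im) =
        Module.finrank F ↥Kr +
          ∑ i : ZMod f,
            ((Finset.range (r i)).filter
              fun j : ℕ => ((j : ℕ) : ZMod m) = (r i : ZMod m) + (c i - d i)).card := by
  intro C0 C1 D Im Kr
  have hγ : ∀ i, (p : ZMod m) * (c (i - 1) - d (i - 1)) + s i = r i + (c i - d i) := fun i => by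
    linear_combination hc i - hd i
  obtain ⟨N, hN⟩ : ∃ N, ∀ i, r i < N :=
    ⟨univ.sup r + 1, fun i => Nat.lt_succ_of_le (le_sup (mem_univ i))⟩
  have hmap :=
    map_DmapCtuples_vanishingBelow (γ := fun i => c i - d i) a b hγ hp.two_le hN
  have hdisj :=
    disjoint_vanishingBelow_ker_DmapCtuples (γ := fun i => c i - d i) a b hγ hp.two_le hN
  have hIm : Im = LinearMap.range (DmapCtuples a b hγ) := (LinearMap.range_restrict _ _).symm
  have hKr : Kr = LinearMap.ker (DmapCtuples a b hγ) := (LinearMap.ker_restrict _).symm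
  rw [hIm, hKr]
  refine ⟨LinearMap.finiteDimensional_quotient_range_of_le (hmap ▸ LinearMap.map_le_range),
    LinearMap.finiteDimensional_ker_of_disjoint hdisj, ?_⟩
  have hindex := LinearMap.finrank_quotient_range_add_finrank_quotient hmap hdisj
  simp only [finrank_quotient_vanishingBelow, card_filter_range_add_natCast_eq,
    add_sub_cancel_left, sum_add_distrib] at hindex
  linarith

/-- For two rank one data `(r,a,c)` and `(s,b,d)`, the cokernel of
`∂ : C⁰ → C¹` is finite-dimensional over `F`, of dimension
`dim ker ∂ + Σ_i #{0 ≤ j < r_i : j ≡ r_i + c_i − d_i (mod m)}`.  (By the paper, `ker ∂`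
computes `Hom(𝔐(r,a,c), 𝔐(s,b,d))` and `coker ∂` computes `Ext¹(𝔐(r,a,c), 𝔐(s,b,d))`.) -/
theorem statement_11
    (p : ℕ) (hp : p.Prime) (F : Type) [Field F] [Fintype F] [CharP F p]
    (f e m : ℕ) [NeZero f] (he : 1 ≤ e) (hm1 : 1 ≤ m) (hm : p ^ f - 1 ∣ m)
    (e' : ℕ) (he' : e' = e * m)
    (r : ZMod f → ℕ) (a : ZMod f → Fˣ) (c : ZMod f → ZMod m)
    (hr : ∀ i, r i ≤ e') (hc : ∀ i, (p : ZMod m) * c (i - 1) = c i + (r i : ZMod m))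
    (s : ZMod f → ℕ) (b : ZMod f → Fˣ) (d : ZMod f → ZMod m)
    (hs : ∀ i, s i ≤ e') (hd : ∀ i, (p : ZMod m) * d (i - 1) = d i + (s i : ZMod m)) :
    let C0 := Ctuples F f m fun i => c i - d i
    let C1 := Ctuples F f m fun i => (r i : ZMod m) + (c i - d i)
    let D := Dmap p F f r s a b
    let Im : Submodule F ↥C1 := Submodule.comap C1.subtype (Submodule.map D C0)
    let Kr : Submodule F ↥C0 := Submodule.comap C0.subtype (LinearMap.ker D)
    FiniteDimensional F (↥C1 ⧸ Im) ∧ FiniteDimensional F ↥Kr ∧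
      Module.finrank F (↥C1 ⧸ Im) =
        Module.finrank F ↥Kr +
          ∑ i : ZMod f,
            ((Finset.range (r i)).filter
              fun j : ℕ => ((j : ℕ) : ZMod m) = (r i : ZMod m) + (c i - d i)).card :=
  statement_11_general p hp F f m r a c hc s b d hd
end
end
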